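/- arXiv:1202.0325 — 7 statements merged into one kernel-verified Lean document; each statement's English description precedes it below -/
import Mathlib

section
/- For density matrices ρ and σ on a finite-dimensional Hilbert space (with σ invertible), define ψ(s|ρ‖σ) = log Tr[ρ^{1+s} σ^{-s}]. Then s ↦ ψ(s|ρ‖σ) is convex on [0,1], ψ(0|ρ‖σ) = 0, and consequently ψ is monotone increasing on (0,1] and s·D(ρ‖σ) ≤ ψ(s|ρ‖σ) for s ∈ (0,1], where D(ρ‖σ) = Tr ρ(log ρ − log σ) is the quantum relative entropy. -/
open Matrix
open scoped ComplexOrder Kronecker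

noncomputable def mpow {n : Type*} [Fintype n] [DecidableEq n]
    (A : Matrix n n ℂ) (s : ℝ) : Matrix n n ℂ :=
  cfc (fun x : ℝ => x ^ s) A

noncomputable def mlog {n : Type*} [Fintype n] [DecidableEq n]
    (A : Matrix n n ℂ) : Matrix n n ℂ :=
  cfc Real.log A

section Aux

set_option linter.unusedSectionVars false

variable {ι : Type*} [Fintype ι]

private lemma g_pos (w t : ι → ℝ) (S : Finset ι) (hw : ∀ k ∈ S, 0 < w k) (hS : S.Nonempty)
    (s : ℝ) : 0 < ∑ k ∈ S, w k * Real.exp (s * t k) :=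
  Finset.sum_pos (fun k hk => mul_pos (hw k hk) (Real.exp_pos _)) hS

private lemma convexOn_log_g (w t : ι → ℝ) (S : Finset ι) (hw : ∀ k ∈ S, 0 < w k)
    (hS : S.Nonempty) :
    ConvexOn ℝ (Set.Icc (0:ℝ) 1) (fun s => Real.log (∑ k ∈ S, w k * Real.exp (s * t k))) := by
  refine ⟨convex_Icc _ _, fun x _ y _ a b ha hb hab => ?_⟩
  set gx := ∑ k ∈ S, w k * Real.exp (x * t k) with hgx
  set gy := ∑ k ∈ S, w k * Real.exp (y * t k) with hgy
  have hgxp : 0 < gx := g_pos w t S hw hS x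
  have hgyp : 0 < gy := g_pos w t S hw hS y
  have key : ∑ k ∈ S, w k * Real.exp ((a • x + b • y) * t k) ≤ gx ^ a * gy ^ b := by
    have h1 : ∀ k ∈ S, w k * Real.exp ((a • x + b • y) * t k)
        = (w k * Real.exp (x * t k)) ^ a * (w k * Real.exp (y * t k)) ^ b := by
      intro k hk
      rw [Real.mul_rpow (hw k hk).le (Real.exp_pos _).le,
        Real.mul_rpow (hw k hk).le (Real.exp_pos _).le, ← Real.exp_mul, ← Real.exp_mul]
      rw [show w k ^ a * Real.exp (x * t k * a) * (w k ^ b * Real.exp (y * t k * b))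
          = (w k ^ a * w k ^ b) * (Real.exp (x * t k * a) * Real.exp (y * t k * b)) by ring]
      rw [← Real.rpow_add (hw k hk), hab, Real.rpow_one, ← Real.exp_add]
      congr 2
      simp only [smul_eq_mul]; ring
    calc ∑ k ∈ S, w k * Real.exp ((a • x + b • y) * t k)
        = ∑ k ∈ S, (w k * Real.exp (x * t k)) ^ a * (w k * Real.exp (y * t k)) ^ b :=
          Finset.sum_congr rfl h1
      _ ≤ ∑ k ∈ S, (a * (w k * Real.exp (x * t k) / gx) + b * (w k * Real.exp (y * t k) / gy))
            * (gx ^ a * gy ^ b) := by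
          refine Finset.sum_le_sum fun k hk => ?_
          have hwk : 0 < w k := hw k hk
          have e1 : (w k * Real.exp (x * t k)) ^ a * (w k * Real.exp (y * t k)) ^ b
              = ((w k * Real.exp (x * t k) / gx) ^ a * (w k * Real.exp (y * t k) / gy) ^ b)
                * (gx ^ a * gy ^ b) := by
            rw [Real.div_rpow (by positivity) hgxp.le, Real.div_rpow (by positivity) hgyp.le]
            field_simp
          rw [e1]
          have := Real.geom_mean_le_arith_mean2_weighted ha hb
            (p₁ := w k * Real.exp (x * t k) / gx) (p₂ := w k * Real.exp (y * t k) / gy)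
            (by positivity) (by positivity) hab
          exact mul_le_mul_of_nonneg_right this (by positivity)
      _ = (a * (∑ k ∈ S, w k * Real.exp (x * t k) / gx)
            + b * (∑ k ∈ S, w k * Real.exp (y * t k) / gy)) * (gx ^ a * gy ^ b) := by
          rw [← Finset.sum_mul, Finset.sum_add_distrib, ← Finset.mul_sum, ← Finset.mul_sum]
      _ = gx ^ a * gy ^ b := by
          rw [← Finset.sum_div, ← Finset.sum_div, ← hgx, ← hgy,
            div_self hgxp.ne', div_self hgyp.ne', mul_one, mul_one, hab, one_mul]
  calc Real.log (∑ k ∈ S, w k * Real.exp ((a • x + b • y) * t k))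
      ≤ Real.log (gx ^ a * gy ^ b) :=
        Real.log_le_log (g_pos w t S hw hS _) key
    _ = a * Real.log gx + b * Real.log gy := by
        rw [Real.log_mul (by positivity) (by positivity), Real.log_rpow hgxp, Real.log_rpow hgyp]

private lemma jensen_g (w t : ι → ℝ) (S : Finset ι) (hw : ∀ k ∈ S, 0 < w k)
    (hsum : ∑ k ∈ S, w k = 1) (s : ℝ) :
    s * (∑ k ∈ S, w k * t k) ≤ Real.log (∑ k ∈ S, w k * Real.exp (s * t k)) := by
  have h := convexOn_exp.map_sum_le (t := S) (w := w) (p := fun k => s * t k)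
    (fun k hk => (hw k hk).le) hsum (fun _ _ => Set.mem_univ _)
  have e1 : ∑ k ∈ S, w k • (s * t k) = s * ∑ k ∈ S, w k * t k := by
    rw [Finset.mul_sum]
    exact Finset.sum_congr rfl fun k _ => by simp [smul_eq_mul]; ring
  have e2 : ∑ k ∈ S, w k • Real.exp (s * t k) = ∑ k ∈ S, w k * Real.exp (s * t k) := by
    simp [smul_eq_mul]
  rw [e1, e2] at h
  calc s * ∑ k ∈ S, w k * t k
      = Real.log (Real.exp (s * ∑ k ∈ S, w k * t k)) := (Real.log_exp _).symm
    _ ≤ Real.log (∑ k ∈ S, w k * Real.exp (s * t k)) :=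
        Real.log_le_log (Real.exp_pos _) h

private lemma gibbs (w v t : ι → ℝ) (S : Finset ι) (hw : ∀ k ∈ S, 0 < w k)
    (hv0 : ∀ k, 0 ≤ v k) (hvS : ∀ k ∈ S, 0 < v k)
    (hwsum : ∑ k ∈ S, w k = 1) (hvsum : ∑ k, v k ≤ 1)
    (ht : ∀ k ∈ S, t k = Real.log (w k) - Real.log (v k)) :
    0 ≤ ∑ k ∈ S, w k * t k := by
  have key : ∑ k ∈ S, w k * (Real.log (v k) - Real.log (w k)) ≤ 0 := by
    have h1 : ∀ k ∈ S, w k * (Real.log (v k) - Real.log (w k)) ≤ v k - w k := by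
      intro k hk
      have hwk := hw k hk; have hvk := hvS k hk
      have := Real.log_le_sub_one_of_pos (div_pos hvk hwk)
      rw [Real.log_div hvk.ne' hwk.ne'] at this
      calc w k * (Real.log (v k) - Real.log (w k)) ≤ w k * (v k / w k - 1) :=
            mul_le_mul_of_nonneg_left this hwk.le
        _ = v k - w k := by field_simp
    calc ∑ k ∈ S, w k * (Real.log (v k) - Real.log (w k))
        ≤ ∑ k ∈ S, (v k - w k) := Finset.sum_le_sum h1
      _ = ∑ k ∈ S, v k - 1 := by rw [Finset.sum_sub_distrib, hwsum]
      _ ≤ 1 - 1 := by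
          have : ∑ k ∈ S, v k ≤ ∑ k, v k :=
            Finset.sum_le_sum_of_subset_of_nonneg (Finset.subset_univ S)
              (fun k _ _ => hv0 k)
          linarith
      _ = 0 := by ring
  have e : ∑ k ∈ S, w k * t k = -∑ k ∈ S, w k * (Real.log (v k) - Real.log (w k)) := by
    rw [← Finset.sum_neg_distrib]
    exact Finset.sum_congr rfl fun k hk => by rw [ht k hk]; ring
  rw [e]; linarith

variable {d : ℕ}

private lemma trace_conj_diag_mul (U V : Matrix.unitaryGroup (Fin d) ℂ) (a b : Fin d → ℝ) :
    Matrix.trace ((U : Matrix (Fin d) (Fin d) ℂ) * diagonal (fun i => (a i : ℂ))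
        * star (U : Matrix (Fin d) (Fin d) ℂ)
      * ((V : Matrix (Fin d) (Fin d) ℂ) * diagonal (fun j => (b j : ℂ))
        * star (V : Matrix (Fin d) (Fin d) ℂ)))
    = ((∑ i, ∑ j, a i * b j
        * Complex.normSq ((star (U : Matrix (Fin d) (Fin d) ℂ)
          * (V : Matrix (Fin d) (Fin d) ℂ)) i j) : ℝ) : ℂ) := by
  set Um := (U : Matrix (Fin d) (Fin d) ℂ)
  set Vm := (V : Matrix (Fin d) (Fin d) ℂ)
  set M := star Um * Vm with hM
  have hUU : Um * star Um = 1 := mem_unitaryGroup_iff.mp U.2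
  have hUU' : star Um * Um = 1 := mem_unitaryGroup_iff'.mp U.2
  have key : (Um * diagonal (fun i => (a i : ℂ)) * star Um)
      * (Vm * diagonal (fun j => (b j : ℂ)) * star Vm)
      = Um * ((diagonal (fun i => (a i : ℂ)) * M)
          * (diagonal (fun j => (b j : ℂ)) * star M)) * star Um := by
    rw [hM, Matrix.star_mul, star_star]
    simp only [Matrix.mul_assoc, hUU, Matrix.mul_one]
  rw [key, Matrix.trace_mul_cycle (Um) _ (star Um), hUU', Matrix.one_mul]
  rw [Matrix.trace]
  have diagent : ∀ i, ((diagonal (fun i => (a i : ℂ)) * M)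
      * (diagonal (fun j => (b j : ℂ)) * star M)) i i
      = ∑ j, ((a i * b j * Complex.normSq (M i j) : ℝ) : ℂ) := by
    intro i
    rw [Matrix.mul_apply]
    refine Finset.sum_congr rfl fun j _ => ?_
    rw [Matrix.diagonal_mul, Matrix.diagonal_mul, Matrix.star_apply]
    push_cast
    rw [show (a i : ℂ) * M i j * ((b j : ℂ) * star (M i j))
        = (a i : ℂ) * (b j : ℂ) * (M i j * star (M i j)) by ring]
    rw [Complex.star_def, Complex.mul_conj]
  push_cast
  exact Finset.sum_congr rfl fun i _ => by rw [Matrix.diag_apply, diagent i]; push_cast; ring_nf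

private lemma trace_conj_diag (U : Matrix.unitaryGroup (Fin d) ℂ) (a : Fin d → ℝ) :
    Matrix.trace ((U : Matrix (Fin d) (Fin d) ℂ) * diagonal (fun i => (a i : ℂ))
        * star (U : Matrix (Fin d) (Fin d) ℂ)) = ((∑ i, a i : ℝ) : ℂ) := by
  rw [Matrix.trace_mul_cycle, mem_unitaryGroup_iff'.mp U.2, Matrix.one_mul,
    Matrix.trace_diagonal]
  push_cast; rfl

private lemma normSq_row_sum (M : Matrix.unitaryGroup (Fin d) ℂ) (i : Fin d) :
    ∑ j, Complex.normSq ((M : Matrix (Fin d) (Fin d) ℂ) i j) = 1 := by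
  have h : ((M : Matrix (Fin d) (Fin d) ℂ) * star (M : Matrix (Fin d) (Fin d) ℂ)) i i = 1 := by
    rw [mem_unitaryGroup_iff.mp M.2]; simp
  rw [Matrix.mul_apply] at h
  have : ((∑ j, Complex.normSq ((M : Matrix (Fin d) (Fin d) ℂ) i j) : ℝ) : ℂ) = 1 := by
    rw [← h]
    push_cast
    exact Finset.sum_congr rfl fun j _ => by
      rw [Matrix.star_apply, Complex.star_def, Complex.mul_conj]
  exact_mod_cast this

private lemma normSq_col_sum (M : Matrix.unitaryGroup (Fin d) ℂ) (j : Fin d) :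
    ∑ i, Complex.normSq ((M : Matrix (Fin d) (Fin d) ℂ) i j) = 1 := by
  have h : (star (M : Matrix (Fin d) (Fin d) ℂ) * (M : Matrix (Fin d) (Fin d) ℂ)) j j = 1 := by
    rw [mem_unitaryGroup_iff'.mp M.2]; simp
  rw [Matrix.mul_apply] at h
  have : ((∑ i, Complex.normSq ((M : Matrix (Fin d) (Fin d) ℂ) i j) : ℝ) : ℂ) = 1 := by
    rw [← h]
    push_cast
    exact Finset.sum_congr rfl fun i _ => by
      rw [Matrix.star_apply, Complex.star_def, mul_comm, Complex.mul_conj]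
  exact_mod_cast this

end Aux

/-- For density matrices ρ, σ (σ invertible), `ψ(s) = log Tr[ρ^{1+s} σ^{-s}]` is convex on
[0,1], vanishes at 0, is monotone increasing on (0,1], and satisfies
`s·D(ρ‖σ) ≤ ψ(s)` for `s ∈ (0,1]`. -/
theorem psi_convex_and_bounds {d : ℕ} (ρ σ : Matrix (Fin d) (Fin d) ℂ)
    (hρ : ρ.PosSemidef) (hρ1 : Matrix.trace ρ = 1)
    (hσ : σ.PosDef) (hσ1 : Matrix.trace σ = 1) :
    ConvexOn ℝ (Set.Icc (0:ℝ) 1)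
      (fun s => Real.log ((Matrix.trace (mpow ρ (1+s) * mpow σ (-s))).re)) ∧
    Real.log ((Matrix.trace (mpow ρ (1+(0:ℝ)) * mpow σ (-(0:ℝ)))).re) = 0 ∧
    MonotoneOn (fun s => Real.log ((Matrix.trace (mpow ρ (1+s) * mpow σ (-s))).re))
      (Set.Ioc (0:ℝ) 1) ∧
    (∀ s ∈ Set.Ioc (0:ℝ) 1,
      s * (Matrix.trace (ρ * (mlog ρ - mlog σ))).re
        ≤ Real.log ((Matrix.trace (mpow ρ (1+s) * mpow σ (-s))).re)) := by
  classical
  have hρH : ρ.IsHermitian := hρ.1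
  have hσH : σ.IsHermitian := hσ.1
  set U := hρH.eigenvectorUnitary with hU
  set V := hσH.eigenvectorUnitary with hV
  set p := hρH.eigenvalues with hp
  set q := hσH.eigenvalues with hq
  set c : Fin d → Fin d → ℝ := fun i j =>
    Complex.normSq ((star (U : Matrix (Fin d) (Fin d) ℂ) * (V : Matrix (Fin d) (Fin d) ℂ)) i j)
    with hc
  have hp0 : ∀ i, 0 ≤ p i := hρ.eigenvalues_nonneg
  have hq0 : ∀ j, 0 < q j := hσ.eigenvalues_pos
  have hc0 : ∀ i j, 0 ≤ c i j := fun i j => Complex.normSq_nonneg _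
  have hcrow : ∀ i, ∑ j, c i j = 1 := fun i => normSq_row_sum (star U * V) i
  have hccol : ∀ j, ∑ i, c i j = 1 := fun j => normSq_col_sum (star U * V) j
  have hmρ : ∀ r : ℝ, mpow ρ r = (U : Matrix (Fin d) (Fin d) ℂ)
      * diagonal (fun i => ((p i ^ r : ℝ) : ℂ)) * star (U : Matrix (Fin d) (Fin d) ℂ) :=
    fun r => by rw [mpow, hρH.cfc_eq]; rfl
  have hmσ : ∀ r : ℝ, mpow σ r = (V : Matrix (Fin d) (Fin d) ℂ)
      * diagonal (fun j => ((q j ^ r : ℝ) : ℂ)) * star (V : Matrix (Fin d) (Fin d) ℂ) :=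
    fun r => by rw [mpow, hσH.cfc_eq]; rfl
  have hlρ : mlog ρ = (U : Matrix (Fin d) (Fin d) ℂ)
      * diagonal (fun i => ((Real.log (p i) : ℝ) : ℂ)) * star (U : Matrix (Fin d) (Fin d) ℂ) := by
    rw [mlog, hρH.cfc_eq]; rfl
  have hlσ : mlog σ = (V : Matrix (Fin d) (Fin d) ℂ)
      * diagonal (fun j => ((Real.log (q j) : ℝ) : ℂ)) * star (V : Matrix (Fin d) (Fin d) ℂ) := by
    rw [mlog, hσH.cfc_eq]; rfl
  have hspecρ : ρ = (U : Matrix (Fin d) (Fin d) ℂ)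
      * diagonal (fun i => ((p i : ℝ) : ℂ)) * star (U : Matrix (Fin d) (Fin d) ℂ) :=
    hρH.spectral_theorem
  have sum_p : ∑ i, p i = 1 := by
    have h1 : ((∑ i, p i : ℝ) : ℂ) = 1 := by
      rw [← trace_conj_diag U p, ← hspecρ]; exact hρ1
    exact_mod_cast h1
  have hspecσ : σ = (V : Matrix (Fin d) (Fin d) ℂ)
      * diagonal (fun j => ((q j : ℝ) : ℂ)) * star (V : Matrix (Fin d) (Fin d) ℂ) :=
    hσH.spectral_theorem
  have sum_q : ∑ j, q j = 1 := by
    have h1 : ((∑ j, q j : ℝ) : ℂ) = 1 := by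
      rw [← trace_conj_diag V q, ← hspecσ]; exact hσ1
    exact_mod_cast h1
  -- the trace of mpow's
  have traceF : ∀ s : ℝ, (Matrix.trace (mpow ρ (1+s) * mpow σ (-s))).re
      = ∑ i, ∑ j, (p i ^ (1+s)) * (q j ^ (-s)) * c i j := by
    intro s
    rw [hmρ (1+s), hmσ (-s), trace_conj_diag_mul U V _ _]
    exact Complex.ofReal_re _
  -- the relative entropy
  have traceD : (Matrix.trace (ρ * (mlog ρ - mlog σ))).re
      = (∑ i, p i * Real.log (p i)) - ∑ i, ∑ j, p i * Real.log (q j) * c i j := by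
    rw [Matrix.mul_sub, Matrix.trace_sub]
    have t1 : Matrix.trace (ρ * mlog ρ)
        = ((∑ i, ∑ j, p i * Real.log (p j) * Complex.normSq
            ((star (U : Matrix (Fin d) (Fin d) ℂ) * (U : Matrix (Fin d) (Fin d) ℂ)) i j) : ℝ) : ℂ) := by
      rw [hlρ, hspecρ]
      exact trace_conj_diag_mul U U p (fun i => Real.log (p i))
    have t2 : Matrix.trace (ρ * mlog σ)
        = ((∑ i, ∑ j, p i * Real.log (q j) * c i j : ℝ) : ℂ) := by
      rw [hlσ, hspecρ]
      exact trace_conj_diag_mul U V p (fun j => Real.log (q j))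
    rw [Complex.sub_re, t1, t2, Complex.ofReal_re, Complex.ofReal_re]
    congr 1
    rw [mem_unitaryGroup_iff'.mp U.2]
    refine Finset.sum_congr rfl fun i _ => ?_
    rw [Finset.sum_eq_single i]
    · simp [Matrix.one_apply]
    · intro j _ hj
      simp [Matrix.one_apply, Ne.symm hj]
    · intro h; exact absurd (Finset.mem_univ i) h
  -- weights
  set w : Fin d × Fin d → ℝ := fun k => p k.1 * c k.1 k.2 with hw_def
  set tt : Fin d × Fin d → ℝ := fun k => Real.log (p k.1) - Real.log (q k.2) with htt_def
  set v : Fin d × Fin d → ℝ := fun k => q k.2 * c k.1 k.2 with hv_def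
  set S : Finset (Fin d × Fin d) := Finset.univ.filter (fun k => w k ≠ 0) with hS_def
  have hw0 : ∀ k, 0 ≤ w k := fun k => mul_nonneg (hp0 _) (hc0 _ _)
  have hwpos : ∀ k ∈ S, 0 < w k := fun k hk =>
    lt_of_le_of_ne (hw0 k) (Ne.symm ((Finset.mem_filter.mp hk).2))
  have hwzero : ∀ k ∉ S, w k = 0 := by
    intro k hk
    by_contra h
    exact hk (Finset.mem_filter.mpr ⟨Finset.mem_univ k, h⟩)
  have hppos : ∀ k ∈ S, 0 < p k.1 := by
    intro k hk
    rcases (hp0 k.1).lt_or_eq with h | h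
    · exact h
    · exact absurd (by simp only [hw_def]; rw [← h, zero_mul]) (hwpos k hk).ne'
  have hcpos : ∀ k ∈ S, 0 < c k.1 k.2 := by
    intro k hk
    rcases (hc0 k.1 k.2).lt_or_eq with h | h
    · exact h
    · exact absurd (by simp only [hw_def]; rw [← h, mul_zero]) (hwpos k hk).ne'
  have hwsum : ∑ k ∈ S, w k = 1 := by
    rw [Finset.sum_filter_ne_zero]
    rw [Fintype.sum_prod_type]
    calc ∑ i, ∑ j, w (i, j) = ∑ i, p i * ∑ j, c i j := by
          refine Finset.sum_congr rfl fun i _ => ?_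
          rw [Finset.mul_sum]
      _ = ∑ i, p i := by
          refine Finset.sum_congr rfl fun i _ => by rw [hcrow i, mul_one]
      _ = 1 := sum_p
  have hSne : S.Nonempty := by
    by_contra h
    rw [Finset.not_nonempty_iff_eq_empty] at h
    rw [h, Finset.sum_empty] at hwsum
    norm_num at hwsum
  -- trace as exponential sum
  have hgf : ∀ s : ℝ, 0 ≤ s → (Matrix.trace (mpow ρ (1+s) * mpow σ (-s))).re
      = ∑ k ∈ S, w k * Real.exp (s * tt k) := by
    intro s hs
    rw [traceF s]
    have hterm : ∀ k ∈ S, w k * Real.exp (s * tt k)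
        = p k.1 ^ (1+s) * q k.2 ^ (-s) * c k.1 k.2 := by
      intro k hk
      have hpk := hppos k hk
      have hqk := hq0 k.2
      have e : Real.exp (s * tt k)
          = Real.exp (Real.log (p k.1) * s) * Real.exp (Real.log (q k.2) * (-s)) := by
        rw [← Real.exp_add]
        congr 1
        simp only [htt_def]
        ring
      rw [e, Real.rpow_add hpk, Real.rpow_one, Real.rpow_def_of_pos hpk,
        Real.rpow_def_of_pos hqk]
      simp only [hw_def]
      ring
    have hvan : ∀ k ∈ (Finset.univ : Finset (Fin d × Fin d)), k ∉ S →
        p k.1 ^ (1+s) * q k.2 ^ (-s) * c k.1 k.2 = 0 := by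
      intro k _ hk
      have hz := hwzero k hk
      simp only [hw_def] at hz
      rcases mul_eq_zero.mp hz with h | h
      · rw [h, Real.zero_rpow (by positivity : (0:ℝ) < 1+s).ne', zero_mul, zero_mul]
      · rw [h, mul_zero]
    calc ∑ i, ∑ j, p i ^ (1+s) * q j ^ (-s) * c i j
        = ∑ k : Fin d × Fin d, p k.1 ^ (1+s) * q k.2 ^ (-s) * c k.1 k.2 :=
          (Fintype.sum_prod_type
            (f := fun k : Fin d × Fin d => p k.1 ^ (1+s) * q k.2 ^ (-s) * c k.1 k.2)).symm
      _ = ∑ k ∈ S, p k.1 ^ (1+s) * q k.2 ^ (-s) * c k.1 k.2 :=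
          (Finset.sum_subset (Finset.subset_univ S) hvan).symm
      _ = ∑ k ∈ S, w k * Real.exp (s * tt k) :=
          Finset.sum_congr rfl fun k hk => (hterm k hk).symm
  -- D sums
  have hDval : ∑ k ∈ S, w k * tt k = (Matrix.trace (ρ * (mlog ρ - mlog σ))).re := by
    rw [traceD]
    have hsub : ∑ k ∈ S, w k * tt k = ∑ k : Fin d × Fin d, w k * tt k :=
      Finset.sum_subset (Finset.subset_univ S)
        (fun k _ hk => by rw [hwzero k hk, zero_mul])
    rw [hsub, Fintype.sum_prod_type]
    have e1 : ∀ i, ∑ j, w (i, j) * tt (i, j)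
        = p i * Real.log (p i) - ∑ j, p i * Real.log (q j) * c i j := by
      intro i
      rw [show ∑ j, w (i, j) * tt (i, j)
          = (∑ j, p i * Real.log (p i) * c i j) - ∑ j, p i * Real.log (q j) * c i j by
        rw [← Finset.sum_sub_distrib]
        exact Finset.sum_congr rfl fun j _ => by simp only [hw_def, htt_def]; ring]
      congr 1
      rw [← Finset.mul_sum, hcrow i, mul_one]
    rw [Finset.sum_congr rfl fun i _ => e1 i, Finset.sum_sub_distrib]
  have hv0 : ∀ k, 0 ≤ v k := fun k => mul_nonneg (hq0 _).le (hc0 _ _)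
  have hvS : ∀ k ∈ S, 0 < v k := fun k hk => mul_pos (hq0 _) (hcpos k hk)
  have hvsum : ∑ k, v k ≤ 1 := by
    rw [Fintype.sum_prod_type]
    rw [Finset.sum_comm]
    calc ∑ j, ∑ i, v (i, j) = ∑ j, q j * ∑ i, c i j := by
          refine Finset.sum_congr rfl fun j _ => ?_
          rw [Finset.mul_sum]
      _ = ∑ j, q j := Finset.sum_congr rfl fun j _ => by rw [hccol j, mul_one]
      _ ≤ 1 := le_of_eq sum_q
  have htlog : ∀ k ∈ S, tt k = Real.log (w k) - Real.log (v k) := by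
    intro k hk
    rw [hw_def, hv_def, htt_def,
      Real.log_mul (hppos k hk).ne' (hcpos k hk).ne',
      Real.log_mul (hq0 k.2).ne' (hcpos k hk).ne']
    ring
  have hDpos : 0 ≤ ∑ k ∈ S, w k * tt k := gibbs w v tt S hwpos hv0 hvS hwsum hvsum htlog
  -- the four parts
  set F := fun s : ℝ => Real.log ((Matrix.trace (mpow ρ (1+s) * mpow σ (-s))).re) with hF
  have hFG : ∀ s : ℝ, 0 ≤ s →
      F s = Real.log (∑ k ∈ S, w k * Real.exp (s * tt k)) := by
    intro s hs
    rw [hF]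
    simp only []
    rw [hgf s hs]
  have hconv0 := convexOn_log_g w tt S hwpos hSne
  have part1 : ConvexOn ℝ (Set.Icc (0:ℝ) 1) F := by
    refine ⟨convex_Icc _ _, fun x hx y hy a b ha hb hab => ?_⟩
    have hxy : a • x + b • y ∈ Set.Icc (0:ℝ) 1 := (convex_Icc (0:ℝ) 1) hx hy ha hb hab
    rw [hFG x hx.1, hFG y hy.1, hFG _ hxy.1]
    exact hconv0.2 hx hy ha hb hab
  have part2 : F 0 = 0 := by
    rw [hFG 0 le_rfl]
    simp only [zero_mul, Real.exp_zero, mul_one]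
    rw [hwsum, Real.log_one]
  have part4 : ∀ s ∈ Set.Ioc (0:ℝ) 1,
      s * (Matrix.trace (ρ * (mlog ρ - mlog σ))).re ≤ F s := by
    intro s hs
    rw [hFG s hs.1.le, ← hDval]
    exact jensen_g w tt S hwpos hwsum s
  have part3 : MonotoneOn F (Set.Ioc (0:ℝ) 1) := by
    intro x hx y hy hxy
    have hy0 : 0 < y := lt_of_lt_of_le hx.1 hxy
    have hFy : 0 ≤ F y := by
      refine le_trans ?_ (part4 y ⟨hy0, hy.2⟩)
      have : 0 ≤ (Matrix.trace (ρ * (mlog ρ - mlog σ))).re := hDval ▸ hDpos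
      positivity
    have hmem0 : (0:ℝ) ∈ Set.Icc (0:ℝ) 1 := ⟨le_refl 0, by norm_num⟩
    have hmemy : y ∈ Set.Icc (0:ℝ) 1 := ⟨hy0.le, hy.2⟩
    have hxyr : x / y ≤ 1 := (div_le_one hy0).mpr hxy
    have hb' : (0:ℝ) ≤ x / y := div_nonneg hx.1.le hy0.le
    have ha' : (0:ℝ) ≤ 1 - x / y := by linarith
    have hab' : (1 - x / y) + x / y = 1 := by ring
    have key := part1.2 hmem0 hmemy ha' hb' hab'
    rw [show (1 - x/y) • (0:ℝ) + (x/y) • y = x by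
      rw [smul_eq_mul, smul_eq_mul, mul_zero, zero_add, div_mul_cancel₀ x hy0.ne']] at key
    calc F x ≤ (1 - x/y) * F 0 + (x/y) * F y := by simpa using key
      _ = (x/y) * F y := by rw [part2]; ring
      _ ≤ 1 * F y := mul_le_mul_of_nonneg_right hxyr hFy
      _ = F y := one_mul _
  exact ⟨part1, part2, part3, part4⟩
end

section
/- Let σ be a positive semidefinite matrix with spectral decomposition σ = ∑_i s_i E_i into v distinct eigenvalues, and let E_σ(ρ) = ∑_i E_i ρ E_i be the pinching map. Then for any positive semidefinite ρ, ρ ≤ v · E_σ(ρ) in the Loewner order. -/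
/-!
For any Hermitian family `E i` summing to `1`,
`v • ∑ i, E i * ρ * E i - ρ = 2⁻¹ • ∑ i, ∑ j, (E i - E j) * ρ * (E i - E j)`,
and every summand on the right is a congruence of `ρ`, hence positive semidefinite.
-/

open Matrix
open scoped ComplexOrder

theorem sum_sum_sub_mul_mul_sub_of_sum_eq_one {R ι : Type*} [Ring R] [Fintype ι]
    {E : ι → R} (hE : ∑ i, E i = 1) (x : R) :
    ∑ i, ∑ j, (E i - E j) * x * (E i - E j)
      = 2 • (Fintype.card ι • ∑ i, E i * x * E i - x) := by
  have expand : ∀ i j, (E i - E j) * x * (E i - E j)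
      = E i * x * E i + E j * x * E j - (E i * x * E j + E j * x * E i) := fun i j => by
    noncomm_ring
  have cross : ∑ i, ∑ j, E i * x * E j = x := by
    simp only [← Finset.mul_sum, ← Finset.sum_mul, hE, mul_one, one_mul]
  simp only [expand, Finset.sum_sub_distrib, Finset.sum_add_distrib, cross, Finset.sum_const,
    Finset.card_univ, ← Finset.smul_sum]
  rw [Finset.sum_comm (f := fun i j => E j * x * E i), cross]
  abel

theorem Matrix.PosSemidef.card_nsmul_sum_mul_mul_sub {𝕜 n ι : Type*} [RCLike 𝕜] [Fintype n]
    [DecidableEq n] [Fintype ι] {ρ : Matrix n n 𝕜} (hρ : ρ.PosSemidef) {E : ι → Matrix n n 𝕜}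
    (hE : ∀ i, (E i).IsHermitian) (hE_sum : ∑ i, E i = 1) :
    (Fintype.card ι • ∑ i, E i * ρ * E i - ρ).PosSemidef := by
  have hconj : ∀ i j, ((E i - E j) * ρ * (E i - E j)).PosSemidef := fun i j => by
    simpa only [conjTranspose_sub, (hE i).eq, (hE j).eq] using
      hρ.mul_mul_conjTranspose_same (E i - E j)
  have htwice : (2 • (Fintype.card ι • ∑ i, E i * ρ * E i - ρ)).PosSemidef := by
    rw [← sum_sum_sub_mul_mul_sub_of_sum_eq_one hE_sum]
    exact posSemidef_sum _ fun i _ => posSemidef_sum _ fun j _ => hconj i j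
  have halve : ∀ X : Matrix n n 𝕜, (2⁻¹ : ℝ) • (2 • X) = X := fun X => by
    rw [two_nsmul, ← two_smul ℝ, inv_smul_smul₀ two_ne_zero]
  simpa only [halve] using htwice.smul (show (0 : ℝ) ≤ 2⁻¹ by norm_num)

theorem pinching_inequality_general {d v : ℕ} (ρ : Matrix (Fin d) (Fin d) ℂ)
    (E : Fin v → Matrix (Fin d) (Fin d) ℂ)
    (hEh : ∀ i, (E i).IsHermitian)
    (hEsum : ∑ i, E i = 1)
    (hρ : ρ.PosSemidef) :
    ((v : ℂ) • (∑ i, E i * ρ * E i) - ρ).PosSemidef := by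
  simpa only [Fintype.card_fin, Nat.cast_smul_eq_nsmul] using
    hρ.card_nsmul_sum_mul_mul_sub hEh hEsum

/-- Pinching inequality: if `σ = ∑ i, s i • E i` is the spectral decomposition of a positive
semidefinite matrix into `v` distinct eigenvalues with mutually orthogonal spectral projections
`E i`, then `ρ ≤ v • ∑ i, E i * ρ * E i` in the Loewner order for any positive semidefinite ρ. -/
theorem pinching_inequality {d v : ℕ} (σ ρ : Matrix (Fin d) (Fin d) ℂ)
    (s : Fin v → ℝ) (E : Fin v → Matrix (Fin d) (Fin d) ℂ)
    (hEh : ∀ i, (E i).IsHermitian)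
    (hEidem : ∀ i, E i * E i = E i)
    (hEorth : ∀ i j, i ≠ j → E i * E j = 0)
    (hEsum : ∑ i, E i = 1)
    (hs : Function.Injective s)
    (hσ : σ = ∑ i, (s i : ℂ) • E i)
    (hσpsd : σ.PosSemidef)
    (hρ : ρ.PosSemidef) :
    ((v : ℂ) • (∑ i, E i * ρ * E i) - ρ).PosSemidef :=
  pinching_inequality_general ρ E hEh hEsum hρ
end

section
/- Let ρ be a density matrix and σ an invertible density matrix with v distinct eigenvalues, and let E_σ be the pinching map with respect to σ. Then D(ρ‖σ) ≤ D(E_σ(ρ)‖σ) + log v, where D is the quantum relative entropy. -/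
open Matrix
open scoped ComplexOrder Kronecker

/-!
The logarithms of `σ` and of `E_σ(ρ)` commute with every spectral projection of `σ`, and pinching
does not change the pairing of `ρ` with such an operator. Hence the difference of the two relative
entropies is `Tr ρ log ρ - Tr ρ log E_σ(ρ)`, which the pinching inequality `ρ ≤ v E_σ(ρ)` bounds
by `log v`.

Operator monotonicity of `log` is unavailable when `ρ` is singular, so we argue in eigenbases:
for `0 ≤ ρ ≤ P` with `P` positive definite, the scalar inequality `a log (a / b) ≤ a² / b - a`,
applied to eigenvalues and weighted by the overlaps of the two eigenbases, reduces
`Tr ρ log ρ ≤ Tr ρ log P` to `Tr (ρ P⁻¹ ρ) ≤ Tr ρ`. This follows from `ρ P⁻¹ ρ ≤ ρ`, obtained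
by conjugating `ρ ≤ P` with `P^(-1/2)`. A singular `E_σ(ρ)` is first made invertible by adding
the projection onto its kernel, which leaves its logarithm unchanged since `Real.log 0 = 0`.
-/

open scoped MatrixOrder

lemma Real.mul_log_sub_log_le {a b : ℝ} (ha : 0 ≤ a) (hb : 0 < b) :
    a * (Real.log a - Real.log b) ≤ a ^ 2 / b - a := by
  rcases ha.eq_or_lt with rfl | ha
  · simp
  have h := Real.log_le_sub_one_of_pos (div_pos ha hb)
  rw [Real.log_div ha.ne' hb.ne'] at h
  calc a * (Real.log a - Real.log b) ≤ a * (a / b - 1) := mul_le_mul_of_nonneg_left h ha.le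
    _ = a ^ 2 / b - a := by ring

open CFC in
lemma mul_ringInverse_mul_le_of_le {A : Type*} [CStarAlgebra A] [PartialOrder A]
    [StarOrderedRing A] {a b : A} (ha : 0 ≤ a) (hb : IsStrictlyPositive b) (hab : a ≤ b) :
    a * Ring.inverse b * a ≤ a := by
  have hb0 : 0 ≤ b := hb.nonneg
  set r : A := b ^ (1 / 2 : ℝ)
  set r' : A := b ^ (-(1 / 2) : ℝ)
  have hr : IsSelfAdjoint r := (rpow_nonneg (a := b)).isSelfAdjoint
  have hr' : IsSelfAdjoint r' := (rpow_nonneg (a := b)).isSelfAdjoint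
  have hrr' : r * r' = 1 := by
    rw [← rpow_add hb.isUnit]; norm_num; exact rpow_zero b
  have hr'r : r' * r = 1 := by
    rw [← rpow_add hb.isUnit]; norm_num; exact rpow_zero b
  have hr'r' : r' * r' = Ring.inverse b := by
    lift b to Aˣ using hb.isUnit
    rw [← rpow_add b.isUnit, Ring.inverse_unit, ← rpow_neg_one_eq_inv b]; norm_num
  set m := r' * a * r'
  have hm0 : 0 ≤ m := conjugate_nonneg_of_nonneg ha rpow_nonneg
  have hm1 : m ≤ 1 := (hr'.conjugate_le_conjugate hab).trans_eq (conjugate_rpow_neg_one_half b)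
  have hmm : m ^ 2 ≤ m ^ 1 := CStarAlgebra.pow_antitone hm0 hm1 (by norm_num)
  have hrmr : r * m * r = a := by
    simp only [m, ← mul_assoc, hrr', one_mul]
    rw [mul_assoc, hr'r, mul_one]
  calc a * Ring.inverse b * a = r * m ^ 2 * r := by
        rw [← hr'r', ← hrmr, sq]
        calc r * m * r * (r' * r') * (r * m * r) = r * m * (r * r') * (r' * r) * m * r := by
              simp only [mul_assoc]
          _ = r * (m * m) * r := by rw [hrr', hr'r]; simp only [mul_one, mul_assoc]
    _ ≤ r * m ^ 1 * r := hr.conjugate_le_conjugate hmm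
    _ = a := by rw [pow_one, hrmr]

namespace Matrix

lemma re_trace_le_re_trace {n : Type*} [Fintype n] {X Y : Matrix n n ℂ} (h : X ≤ Y) :
    (trace X).re ≤ (trace Y).re := by
  have := (Complex.le_def.mp (Matrix.le_iff.mp h).trace_nonneg).1
  rw [trace_sub, Complex.sub_re, Complex.zero_re] at this
  linarith

variable {n : Type*} [Fintype n] [DecidableEq n] {A B : Matrix n n ℂ}

/-- `‖⟪u_k, w_j⟫‖²` for the eigenbases `u` of `A` and `w` of `B`. -/
noncomputable def IsHermitian.eigenOverlap (hA : A.IsHermitian) (hB : B.IsHermitian) (k j : n) :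
    ℝ :=
  Complex.normSq ((star (hA.eigenvectorUnitary : Matrix n n ℂ) * hB.eigenvectorUnitary) k j)

lemma IsHermitian.re_trace_cfc_mul_cfc (hA : A.IsHermitian) (hB : B.IsHermitian) (f g : ℝ → ℝ) :
    (trace (cfc f A * cfc g B)).re =
      ∑ k, ∑ j, f (hA.eigenvalues k) * g (hB.eigenvalues j) * hA.eigenOverlap hB k j := by
  set U : Matrix n n ℂ := (hA.eigenvectorUnitary : Matrix n n ℂ)
  set W : Matrix n n ℂ := (hB.eigenvectorUnitary : Matrix n n ℂ)
  have hcycle : trace (cfc f A * cfc g B) =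
      trace (diagonal (fun k ↦ (f (hA.eigenvalues k) : ℂ)) * (star U * W) *
        diagonal (fun j ↦ (g (hB.eigenvalues j) : ℂ)) * star (star U * W)) := by
    rw [hA.cfc_eq, hB.cfc_eq, IsHermitian.cfc, IsHermitian.cfc, Unitary.conjStarAlgAut_apply,
      Unitary.conjStarAlgAut_apply, star_mul, star_star]
    simp only [mul_assoc]
    rw [trace_mul_comm U]
    simp only [mul_assoc, Function.comp_def]
    rfl
  rw [hcycle, trace, Complex.re_sum]
  refine Finset.sum_congr rfl fun k _ ↦ ?_
  rw [diag, mul_apply, Complex.re_sum]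
  refine Finset.sum_congr rfl fun j _ ↦ ?_
  simp only [mul_diagonal, diagonal_mul, star_apply, RCLike.star_def]
  rw [show ∀ (a b : ℝ) (z : ℂ), (a : ℂ) * z * b * (starRingEnd ℂ) z = (a * b * z.normSq : ℝ) by
    intro a b z; push_cast; rw [Complex.normSq_eq_conj_mul_self]; ring]
  rfl

theorem re_trace_mul_mlog_le_of_le {ρ P : Matrix n n ℂ} (hρ : 0 ≤ ρ) (hP : P.PosDef)
    (hρP : ρ ≤ P) : (trace (ρ * mlog ρ)).re ≤ (trace (ρ * mlog P)).re := by
  have hρH : ρ.IsHermitian := hρ.isSelfAdjoint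
  set a := hρH.eigenvalues
  set b := hP.1.eigenvalues
  set q := hρH.eigenOverlap hP.1
  have expand := hρH.re_trace_cfc_mul_cfc hP.1
  have hcont : ∀ f : ℝ → ℝ, ContinuousOn f (spectrum ℝ ρ) := ρ.finite_real_spectrum.continuousOn
  have hρ_eq : cfc (fun x : ℝ ↦ x) ρ = ρ := cfc_id' ℝ ρ
  have hone : cfc (fun _ : ℝ ↦ (1 : ℝ)) P = 1 := cfc_const_one ℝ P
  have htr : (trace ρ).re = ∑ k, ∑ j, a k * q k j := by
    simpa [hρ_eq, hone] using expand (fun x ↦ x) (fun _ ↦ 1)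
  have hlogρ : (trace (ρ * mlog ρ)).re = ∑ k, ∑ j, a k * Real.log (a k) * q k j := by
    have hmul : ρ * mlog ρ = cfc (fun x ↦ x * Real.log x) ρ := by
      rw [cfc_mul _ _ _ (hcont _) (hcont _), hρ_eq, mlog]
    rw [hmul, ← mul_one (cfc _ ρ), ← hone, expand]
    simp only [mul_one]
    rfl
  have hlogP : (trace (ρ * mlog P)).re = ∑ k, ∑ j, a k * Real.log (b j) * q k j := by
    rw [← expand (fun x ↦ x) Real.log, hρ_eq]
    rfl
  have hquad : ∑ k, ∑ j, a k ^ 2 * (b j)⁻¹ * q k j ≤ (trace ρ).re := by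
    have hle : ρ * Ring.inverse P * ρ ≤ ρ := by
      open scoped Matrix.Norms.L2Operator in
      exact mul_ringInverse_mul_le_of_le hρ (isStrictlyPositive_iff_posDef.mpr hP) hρP
    rw [← expand (fun x ↦ x ^ 2) (fun y ↦ y⁻¹), cfc_pow _ _ _ (hcont _), hρ_eq,
      cfc_ringInverse_id P hP.isUnit, sq, mul_assoc, ← trace_mul_comm]
    exact re_trace_le_re_trace hle
  have ha : ∀ k, 0 ≤ a k := (nonneg_iff_posSemidef.mp hρ).eigenvalues_nonneg
  have hterm : ∀ k j, a k * Real.log (a k) * q k j - a k * Real.log (b j) * q k j ≤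
      a k ^ 2 * (b j)⁻¹ * q k j - a k * q k j := fun k j ↦
    calc _ = a k * (Real.log (a k) - Real.log (b j)) * q k j := by ring
      _ ≤ (a k ^ 2 / b j - a k) * q k j := mul_le_mul_of_nonneg_right
          (Real.mul_log_sub_log_le (ha k) (hP.eigenvalues_pos j)) (Complex.normSq_nonneg _)
      _ = _ := by ring
  have hsum := Finset.sum_le_sum fun k (_ : k ∈ Finset.univ) ↦
    Finset.sum_le_sum fun j (_ : j ∈ Finset.univ) ↦ hterm k j
  simp only [Finset.sum_sub_distrib] at hsum
  linarith

lemma mlog_smul {P : Matrix n n ℂ} (hP : P.PosDef) {c : ℝ} (hc : 0 < c) :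
    mlog (c • P) = algebraMap ℝ _ (Real.log c) + mlog P := by
  have hspec : ∀ x ∈ spectrum ℝ P, 0 < x :=
    (StarOrderedRing.isStrictlyPositive_iff_spectrum_pos P hP.1).mp
      (isStrictlyPositive_iff_posDef.mpr hP)
  have hcont : ∀ f : ℝ → ℝ, ContinuousOn f (spectrum ℝ P) := P.finite_real_spectrum.continuousOn
  rw [mlog, mlog,
    ← cfc_comp_const_mul c Real.log P ((P.finite_real_spectrum.image _).continuousOn _),
    ← cfc_const (Real.log c) P, ← cfc_add (a := P) _ _ (hcont _) (hcont _)]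
  exact cfc_congr fun x hx ↦ Real.log_mul hc.ne' (hspec x hx).ne'

lemma exists_posDef_le_mlog_eq {P : Matrix n n ℂ} (hP : 0 ≤ P) :
    ∃ P' : Matrix n n ℂ, P'.PosDef ∧ P ≤ P' ∧ mlog P' = mlog P := by
  have hcont : ∀ f : ℝ → ℝ, ContinuousOn f (spectrum ℝ P) := P.finite_real_spectrum.continuousOn
  set r : ℝ → ℝ := fun y ↦ if y = 0 then 1 else y
  refine ⟨cfc r P, ?_, ?_, ?_⟩
  · refine isStrictlyPositive_iff_posDef.mp
      ((cfc_isStrictlyPositive_iff r P (hcont _)).mpr fun x hx ↦ ?_)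
    by_cases h : x = 0
    · simp [r, h]
    · simpa [r, h] using (spectrum_nonneg_of_nonneg hP hx).lt_of_ne' h
  · conv_lhs => rw [← cfc_id' ℝ P]
    refine cfc_mono (fun x _ ↦ ?_) (hcont _) (hcont _)
    by_cases h : x = 0 <;> simp [r, h]
  · rw [mlog, mlog, ← cfc_comp' _ _ _ ((P.finite_real_spectrum.image _).continuousOn _) (hcont _)]
    refine cfc_congr fun x _ ↦ ?_
    by_cases h : x = 0 <;> simp [r, h]

theorem re_trace_mul_mlog_le_of_le_smul {ρ P : Matrix n n ℂ} {c : ℝ} (hc : 0 < c) (hρ : 0 ≤ ρ)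
    (hP : 0 ≤ P) (hρP : ρ ≤ c • P) :
    (trace (ρ * mlog ρ)).re ≤ (trace (ρ * mlog P)).re + (trace ρ).re * Real.log c := by
  obtain ⟨P', hP', hPP', hlog⟩ := exists_posDef_le_mlog_eq hP
  have h := re_trace_mul_mlog_le_of_le hρ (hP'.smul hc)
    (hρP.trans (smul_le_smul_of_nonneg_left hPP' hc.le))
  rw [mlog_smul hP' hc, hlog, mul_add, trace_add, Complex.add_re, Algebra.algebraMap_eq_smul_one,
    mul_smul_comm, mul_one, trace_smul, Complex.smul_re, smul_eq_mul] at h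
  linarith

end Matrix

section Pinching

variable {𝕜 n ι : Type*} [RCLike 𝕜] [Fintype n] {E : ι → Matrix n n 𝕜}

lemma commute_of_orthogonal (hEorth : ∀ i j, i ≠ j → E i * E j = 0) (i j : ι) :
    Commute (E i) (E j) := by
  rcases eq_or_ne i j with rfl | hij
  · exact Commute.refl _
  · exact (hEorth i j hij).trans (hEorth j i hij.symm).symm

variable [Fintype ι]

lemma commute_sum_smul_of_orthogonal (hEorth : ∀ i j, i ≠ j → E i * E j = 0) (c : ι → 𝕜)
    (i : ι) : Commute (∑ j, c j • E j) (E i) :=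
  Commute.sum_left _ _ _ fun j _ ↦ (commute_of_orthogonal hEorth j i).smul_left (c j)

def pinching (E : ι → Matrix n n 𝕜) (ρ : Matrix n n 𝕜) : Matrix n n 𝕜 :=
  ∑ i, E i * ρ * E i

lemma pinching_nonneg (hE : ∀ i, (E i).IsHermitian) {ρ : Matrix n n 𝕜} (hρ : 0 ≤ ρ) :
    0 ≤ pinching E ρ :=
  Finset.sum_nonneg fun i _ ↦ (hE i).isSelfAdjoint.conjugate_nonneg hρ

variable [DecidableEq n]

lemma le_card_smul_pinching (hE : ∀ i, (E i).IsHermitian) (hEsum : ∑ i, E i = 1)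
    {ρ : Matrix n n 𝕜} (hρ : 0 ≤ ρ) : ρ ≤ (Fintype.card ι : ℝ) • pinching E ρ := by
  have hcross : ∑ i, ∑ j, E i * ρ * E j = ρ := by
    rw [← Finset.sum_mul_sum, ← Finset.sum_mul, hEsum, one_mul, mul_one]
  have hdiag : ∑ i, ∑ _j : ι, E i * ρ * E i = (Fintype.card ι : ℝ) • pinching E ρ := by
    simp [pinching, Finset.smul_sum, Nat.cast_smul_eq_nsmul]
  have hexpand : ∑ i, ∑ j, (E i - E j) * ρ * (E i - E j) =
      (2 : ℝ) • ((Fintype.card ι : ℝ) • pinching E ρ - ρ) := by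
    have h : ∀ i j, (E i - E j) * ρ * (E i - E j) =
        E i * ρ * E i + E j * ρ * E j - E i * ρ * E j - E j * ρ * E i := fun i j ↦ by noncomm_ring
    simp only [h, Finset.sum_add_distrib, Finset.sum_sub_distrib]
    rw [Finset.sum_comm (f := fun i j ↦ E j * ρ * E j),
      Finset.sum_comm (f := fun i j ↦ E j * ρ * E i), hdiag, hcross]
    module
  have hsq : 0 ≤ ∑ i, ∑ j, (E i - E j) * ρ * (E i - E j) :=
    Finset.sum_nonneg fun i _ ↦ Finset.sum_nonneg fun j _ ↦
      ((hE i).sub (hE j)).isSelfAdjoint.conjugate_nonneg hρ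
  rw [hexpand] at hsq
  exact sub_nonneg.mp (nonneg_of_smul_nonneg_of_pos_left hsq two_pos)

lemma commute_pinching (hEidem : ∀ i, E i * E i = E i) (hEorth : ∀ i j, i ≠ j → E i * E j = 0)
    (ρ : Matrix n n 𝕜) (i : ι) : Commute (pinching E ρ) (E i) := by
  have hright : pinching E ρ * E i = E i * ρ * E i := by
    rw [pinching, Finset.sum_mul, Finset.sum_eq_single i]
    · rw [mul_assoc, hEidem]
    · intro j _ hji
      rw [mul_assoc, hEorth j i hji, mul_zero]
    · simp
  have hleft : E i * pinching E ρ = E i * ρ * E i := by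
    rw [pinching, Finset.mul_sum, Finset.sum_eq_single i]
    · rw [← mul_assoc, ← mul_assoc, hEidem]
    · intro j _ hji
      rw [← mul_assoc, ← mul_assoc, hEorth i j hji.symm, zero_mul, zero_mul]
    · simp
  exact hright.trans hleft.symm

lemma trace_pinching_mul (hEidem : ∀ i, E i * E i = E i) (hEsum : ∑ i, E i = 1)
    (ρ : Matrix n n 𝕜) {X : Matrix n n 𝕜} (hX : ∀ i, Commute X (E i)) :
    trace (pinching E ρ * X) = trace (ρ * X) := by
  have h : ∀ i, trace (E i * ρ * E i * X) = trace (E i * (ρ * X)) := fun i ↦ by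
    rw [mul_assoc, ← (hX i).eq, ← mul_assoc, trace_mul_comm, ← mul_assoc, ← mul_assoc, hEidem,
      mul_assoc]
  rw [pinching, Finset.sum_mul, trace_sum, Finset.sum_congr rfl fun i _ ↦ h i, ← trace_sum,
    ← Finset.sum_mul, hEsum, one_mul]

end Pinching

theorem relEntropy_le_pinched_add_log_general {d v : ℕ} (ρ σ : Matrix (Fin d) (Fin d) ℂ)
    (s : Fin v → ℝ) (E : Fin v → Matrix (Fin d) (Fin d) ℂ)
    (hρ : ρ.PosSemidef) (hρ1 : Matrix.trace ρ = 1)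
    (hEh : ∀ i, (E i).IsHermitian)
    (hEidem : ∀ i, E i * E i = E i)
    (hEorth : ∀ i j, i ≠ j → E i * E j = 0)
    (hEsum : ∑ i, E i = 1)
    (hspec : σ = ∑ i, (s i : ℂ) • E i) :
    (Matrix.trace (ρ * (mlog ρ - mlog σ))).re
      ≤ (Matrix.trace ((∑ i, E i * ρ * E i) *
          (mlog (∑ i, E i * ρ * E i) - mlog σ))).re + Real.log v := by
  change _ ≤ (trace (pinching E ρ * (mlog (pinching E ρ) - mlog σ))).re + _
  have hρ0 : 0 ≤ ρ := nonneg_iff_posSemidef.mpr hρ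
  have hv : 0 < (v : ℝ) := by
    rcases Nat.eq_zero_or_pos v with rfl | hv
    · have h01 : (0 : Matrix (Fin d) (Fin d) ℂ) = 1 := by simpa using hEsum
      rw [← mul_one ρ, ← h01, mul_zero, trace_zero] at hρ1
      exact absurd hρ1 zero_ne_one
    · exact_mod_cast hv
  have hσE : ∀ i, Commute (mlog σ) (E i) := fun i ↦
    (hspec ▸ commute_sum_smul_of_orthogonal hEorth _ i).cfc_real _
  have hPE : ∀ i, Commute (mlog (pinching E ρ)) (E i) := fun i ↦
    (commute_pinching hEidem hEorth ρ i).cfc_real _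
  have key := re_trace_mul_mlog_le_of_le_smul hv hρ0 (pinching_nonneg hEh hρ0)
    (by simpa using le_card_smul_pinching hEh hEsum hρ0)
  rw [hρ1, Complex.one_re, one_mul] at key
  rw [mul_sub, mul_sub, trace_sub, trace_sub, trace_pinching_mul hEidem hEsum ρ hσE,
    trace_pinching_mul hEidem hEsum ρ hPE, Complex.sub_re, Complex.sub_re]
  linarith

/-- For a density matrix ρ and an invertible density matrix σ with `v` distinct eigenvalues
(spectral projections `E i`), the relative entropy satisfies
`D(ρ‖σ) ≤ D(E_σ(ρ)‖σ) + log v` where `E_σ(ρ) = ∑ i, E i * ρ * E i` is the pinching map. -/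
theorem relEntropy_le_pinched_add_log {d v : ℕ} (ρ σ : Matrix (Fin d) (Fin d) ℂ)
    (s : Fin v → ℝ) (E : Fin v → Matrix (Fin d) (Fin d) ℂ)
    (hρ : ρ.PosSemidef) (hρ1 : Matrix.trace ρ = 1)
    (hσ : σ.PosDef) (hσ1 : Matrix.trace σ = 1)
    (hEh : ∀ i, (E i).IsHermitian)
    (hEidem : ∀ i, E i * E i = E i)
    (hEorth : ∀ i j, i ≠ j → E i * E j = 0)
    (hEsum : ∑ i, E i = 1)
    (hs : Function.Injective s)
    (hspec : σ = ∑ i, (s i : ℂ) • E i) :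
    (Matrix.trace (ρ * (mlog ρ - mlog σ))).re
      ≤ (Matrix.trace ((∑ i, E i * ρ * E i) *
          (mlog (∑ i, E i * ρ * E i) - mlog σ))).re + Real.log v :=
  relEntropy_le_pinched_add_log_general ρ σ s E hρ hρ1 hEh hEidem hEorth hEsum hspec
end

section
/- (Reverse operator Hölder inequality) For any positive semidefinite matrices X and any positive definite matrix Y on a finite-dimensional Hilbert space, and any t > 0, Tr(XY) ≥ (Tr X^{1/(1+t)})^{1+t} · (Tr Y^{-1/t})^{-t}. -/
open Matrix
open scoped ComplexOrder Kronecker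

/-!
Diagonalize `Y = V diag(y) V*` and let `bᵢ = (V* X V)ᵢᵢ` be the diagonal of `X` in the eigenbasis
of `Y`, so that `Tr(XY) = ∑ bᵢ yᵢ`. Each `bᵢ` is a convex combination of the eigenvalues of `X`,
with the same weights that express `(V* X^s V)ᵢᵢ` through their `s`-th powers; hence Jensen's
inequality for the concave map `x ↦ x^s`, `s = 1/(1+t)`, gives `Tr X^s ≤ ∑ bᵢ^s`. What remains is
the scalar reverse Hölder inequality, which is Hölder's inequality with exponents `1`, `1/t` and
`1/(1+t)` applied to `bᵢ = (bᵢ yᵢ) yᵢ⁻¹`.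
-/

namespace Real

theorem reverse_Lp_mul_Lq_le_inner_of_nonneg {ι : Type*} (s : Finset ι) {a y : ι → ℝ}
    (ha : ∀ i ∈ s, 0 ≤ a i) (hy : ∀ i ∈ s, 0 < y i) {t : ℝ} (ht : 0 < t) :
    (∑ i ∈ s, a i ^ (1 / (1 + t))) ^ (1 + t) * (∑ i ∈ s, y i ^ (-(1 / t))) ^ (-t)
      ≤ ∑ i ∈ s, a i * y i := by
  have ht1 : 0 < 1 + t := by linarith
  have hT : HolderTriple 1 (1 / t) (1 / (1 + t)) := ⟨by simp, one_pos, by positivity⟩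
  have hH := Lr_rpow_le_Lp_mul_Lq_of_nonneg s hT (f := fun i => a i * y i)
    (g := fun i => (y i)⁻¹) (fun i hi => mul_nonneg (ha i hi) (hy i hi).le)
    (fun i hi => (inv_pos.2 (hy i hi)).le)
  have hcancel : ∀ i ∈ s, (a i * y i * (y i)⁻¹) ^ (1 / (1 + t)) = a i ^ (1 / (1 + t)) :=
    fun i hi => by rw [mul_inv_cancel_right₀ (hy i hi).ne']
  have hinv : ∀ i ∈ s, (y i)⁻¹ ^ (1 / t) = y i ^ (-(1 / t)) := fun i hi => by
    rw [inv_rpow (hy i hi).le, rpow_neg (hy i hi).le]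
  simp only [rpow_one, div_one, Finset.sum_congr rfl hcancel, Finset.sum_congr rfl hinv] at hH
  set A := ∑ i ∈ s, a i ^ (1 / (1 + t))
  set B := ∑ i ∈ s, a i * y i
  set S := ∑ i ∈ s, y i ^ (-(1 / t))
  have hB : 0 ≤ B := Finset.sum_nonneg fun i hi => mul_nonneg (ha i hi) (hy i hi).le
  have hS0 : 0 ≤ S := Finset.sum_nonneg fun i hi => (rpow_pos_of_pos (hy i hi) _).le
  rcases hS0.eq_or_lt with hS | hS
  · -- `0 ^ (-t) = 0` for the real power, so the left side vanishes
    rw [← hS, zero_rpow (by linarith), mul_zero]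
    exact hB
  have hpow : A ^ (1 + t) ≤ B * S ^ t := by
    have hA : 0 ≤ A := Finset.sum_nonneg fun i hi => rpow_nonneg (ha i hi) _
    calc A ^ (1 + t) ≤ (B ^ (1 / (1 + t)) * S ^ (1 / (1 + t) / (1 / t))) ^ (1 + t) := by
          gcongr
      _ = B * S ^ t := by
        rw [mul_rpow (by positivity) (by positivity), ← rpow_mul hB, ← rpow_mul hS.le,
          one_div_mul_cancel ht1.ne', rpow_one]
        congr 1
        field_simp
  calc A ^ (1 + t) * S ^ (-t) ≤ B * S ^ t * S ^ (-t) := by gcongr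
    _ = B := by rw [mul_assoc, ← rpow_add hS, add_neg_cancel, rpow_zero, mul_one]

end Real

namespace Matrix

variable {n : Type*} [Fintype n] [DecidableEq n]

theorem trace_star_mul_mul_of_mem_unitary {R : Type*} [CommSemiring R] [StarRing R]
    {U : Matrix n n R} (hU : U ∈ unitary (Matrix n n R)) (A : Matrix n n R) : trace (star U * A * U) = trace A := by
  rw [trace_mul_cycle, Unitary.mul_star_self_of_mem hU, one_mul]

theorem star_mul_diagonal_mul_apply_self (W : Matrix n n ℂ) (v : n → ℝ) (i : n) :
    (star W * diagonal (fun j => (v j : ℂ)) * W) i i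
      = ∑ j, (Complex.normSq (W j i) * v j : ℝ) := by
  rw [mul_apply, Complex.ofReal_sum]
  refine Finset.sum_congr rfl fun j _ => ?_
  rw [mul_diagonal, star_apply, RCLike.star_def, Complex.ofReal_mul,
    Complex.normSq_eq_conj_mul_self]
  ring

theorem sum_normSq_apply_of_mem_unitary {W : Matrix n n ℂ} (hW : W ∈ unitary (Matrix n n ℂ))
    (i : n) : ∑ j, Complex.normSq (W j i) = 1 := by
  have h : (star W * W) i i = (1 : Matrix n n ℂ) i i := by rw [Unitary.star_mul_self_of_mem hW]
  simp only [mul_apply, star_apply, RCLike.star_def, one_apply_eq] at h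
  exact_mod_cast (Complex.ofReal_sum _ _).trans
    ((Finset.sum_congr rfl fun j _ => by rw [Complex.normSq_eq_conj_mul_self]).trans h)

namespace IsHermitian

variable {X : Matrix n n ℂ} (hX : X.IsHermitian)
include hX

theorem re_trace_cfc (f : ℝ → ℝ) : (trace (cfc f X)).re = ∑ i, f (hX.eigenvalues i) := by
  rw [hX.cfc_eq, IsHermitian.cfc, Unitary.conjStarAlgAut_apply, trace_mul_cycle,
    Unitary.coe_star_mul_self, one_mul, trace_diagonal, Complex.re_sum]
  rfl

theorem star_mul_cfc_mul_apply_self (U : Matrix n n ℂ) (f : ℝ → ℝ) (i : n) :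
    (star U * cfc f X * U) i i = ∑ j,
      (Complex.normSq ((star (hX.eigenvectorUnitary : Matrix n n ℂ) * U) j i)
        * f (hX.eigenvalues j) : ℝ) := by
  have hconj : ∀ V D : Matrix n n ℂ,
      star U * (V * D * star V) * U = star (star V * U) * D * (star V * U) := fun V D => by
    simp only [star_mul, star_star, Matrix.mul_assoc]
  rw [hX.cfc_eq, IsHermitian.cfc, Unitary.conjStarAlgAut_apply, hconj]
  exact star_mul_diagonal_mul_apply_self _ (f ∘ hX.eigenvalues) i

theorem re_star_mul_cfc_mul_apply_self_le {U : Matrix n n ℂ} (hU : U ∈ unitary (Matrix n n ℂ))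
    {f : ℝ → ℝ} {s : Set ℝ} (hf : ConcaveOn ℝ s f) (hs : ∀ j, hX.eigenvalues j ∈ s) (i : n) :
    ((star U * cfc f X * U) i i).re ≤ f ((star U * X * U) i i).re := by
  have hW : star (hX.eigenvectorUnitary : Matrix n n ℂ) * U ∈ unitary (Matrix n n ℂ) :=
    mul_mem (Unitary.star_mem hX.eigenvectorUnitary.2) hU
  -- with `X = cfc id X`, both sides expand over the same convex weights `|(V* U)ⱼᵢ|²`
  conv_rhs => rw [← cfc_id' ℝ X]
  rw [hX.star_mul_cfc_mul_apply_self, hX.star_mul_cfc_mul_apply_self, Complex.ofReal_re,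
    Complex.ofReal_re]
  exact hf.le_map_sum (fun j _ => Complex.normSq_nonneg _)
    (sum_normSq_apply_of_mem_unitary hW i) fun j _ => hs j

theorem re_trace_cfc_le_sum {U : Matrix n n ℂ} (hU : U ∈ unitary (Matrix n n ℂ))
    {f : ℝ → ℝ} {s : Set ℝ} (hf : ConcaveOn ℝ s f) (hs : ∀ j, hX.eigenvalues j ∈ s) :
    (trace (cfc f X)).re ≤ ∑ i, f ((star U * X * U) i i).re := by
  rw [← trace_star_mul_mul_of_mem_unitary hU, trace, Complex.re_sum]
  exact Finset.sum_le_sum fun i _ => hX.re_star_mul_cfc_mul_apply_self_le hU hf hs i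

end IsHermitian

theorem IsHermitian.re_trace_mul_eq_sum {Y : Matrix n n ℂ} (hY : Y.IsHermitian)
    (X : Matrix n n ℂ) :
    (trace (X * Y)).re = ∑ i, ((star (hY.eigenvectorUnitary : Matrix n n ℂ) * X
      * hY.eigenvectorUnitary) i i).re * hY.eigenvalues i := by
  have hV := hY.eigenvectorUnitary.2
  conv_lhs => rw [hY.spectral_theorem, Unitary.conjStarAlgAut_apply,
    ← trace_star_mul_mul_of_mem_unitary hV]
  simp only [Matrix.mul_assoc, Unitary.star_mul_self_of_mem hV, Matrix.mul_one]
  simp only [← Matrix.mul_assoc, trace, diag, mul_diagonal, Complex.re_sum, Function.comp_apply]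
  exact Finset.sum_congr rfl fun i _ => Complex.re_mul_ofReal _ _

end Matrix

/-- Reverse operator Hölder inequality: for `X ≥ 0`, `Y > 0` and `t > 0`,
`Tr(XY) ≥ (Tr X^{1/(1+t)})^{1+t} (Tr Y^{-1/t})^{-t}`. -/
theorem reverse_operator_holder {d : ℕ} (X Y : Matrix (Fin d) (Fin d) ℂ) (t : ℝ)
    (hX : X.PosSemidef) (hY : Y.PosDef) (ht : 0 < t) :
    ((Matrix.trace (mpow X (1/(1+t)))).re) ^ (1+t)
        * ((Matrix.trace (mpow Y (-(1/t)))).re) ^ (-t)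
      ≤ (Matrix.trace (X * Y)).re := by
  set V : Matrix (Fin d) (Fin d) ℂ :=
    (hY.isHermitian.eigenvectorUnitary : Matrix (Fin d) (Fin d) ℂ)
  have hconcave : ConcaveOn ℝ (Set.Ici 0) fun x : ℝ => x ^ (1 / (1 + t)) :=
    Real.concaveOn_rpow (by positivity) (div_le_one_of_le₀ (by linarith) (by positivity))
  have hdiag : ∀ i, 0 ≤ ((star V * X * V) i i).re := fun i =>
    (Complex.nonneg_iff.1 (hX.conjTranspose_mul_mul_same V).diag_nonneg).1
  have htrX : 0 ≤ (trace (mpow X (1 / (1 + t)))).re := by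
    rw [mpow, hX.isHermitian.re_trace_cfc]
    exact Finset.sum_nonneg fun i _ => Real.rpow_nonneg (hX.eigenvalues_nonneg i) _
  have hsumY : 0 ≤ ∑ i, hY.isHermitian.eigenvalues i ^ (-(1 / t)) :=
    Finset.sum_nonneg fun i _ => (Real.rpow_pos_of_pos (hY.eigenvalues_pos i) _).le
  calc ((trace (mpow X (1/(1+t)))).re) ^ (1+t) * ((trace (mpow Y (-(1/t)))).re) ^ (-t)
      ≤ (∑ i, ((star V * X * V) i i).re ^ (1 / (1 + t))) ^ (1 + t)
          * (∑ i, hY.isHermitian.eigenvalues i ^ (-(1 / t))) ^ (-t) := by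
        simp only [mpow]
        rw [hY.isHermitian.re_trace_cfc]
        refine mul_le_mul_of_nonneg_right (Real.rpow_le_rpow htrX ?_ (by linarith))
          (Real.rpow_nonneg hsumY _)
        exact hX.isHermitian.re_trace_cfc_le_sum hY.isHermitian.eigenvectorUnitary.2 hconcave
          hX.eigenvalues_nonneg
    _ ≤ ∑ i, ((star V * X * V) i i).re * hY.isHermitian.eigenvalues i :=
        Real.reverse_Lp_mul_Lq_le_inner_of_nonneg _ (fun i _ => hdiag i)
          (fun i _ => hY.eigenvalues_pos i) ht
    _ = (trace (X * Y)).re := (hY.isHermitian.re_trace_mul_eq_sum X).symm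
end

section
/- Let W : x ↦ W_x be a map from a finite set X to density matrices, p a probability distribution on X, and t ≥ 0. Then min over density matrices ρ of ∑_x p(x) Tr[W_x^{1+t} ρ^{-t}] equals (Tr[(∑_x p(x) W_x^{1+t})^{1/(1+t)}])^{1+t}, and the minimum is attained at ρ = (∑_x p(x)W_x^{1+t})^{1/(1+t)} / Tr[(∑_x p(x)W_x^{1+t})^{1/(1+t)}]. -/
open Matrix
open scoped ComplexOrder Kronecker

/-- `∑ x, p x • W x ^{1+t}`. -/
noncomputable def Smat {X : Type*} [Fintype X] {d : ℕ}
    (W : X → Matrix (Fin d) (Fin d) ℂ) (p : X → ℝ) (t : ℝ) : Matrix (Fin d) (Fin d) ℂ :=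
  ∑ x, (p x : ℂ) • mpow (W x) (1+t)

/-- `(Tr[(∑_x p(x) W_x^{1+t})^{1/(1+t)}])^{1+t}`. -/
noncomputable def targetVal {X : Type*} [Fintype X] {d : ℕ}
    (W : X → Matrix (Fin d) (Fin d) ℂ) (p : X → ℝ) (t : ℝ) : ℝ :=
  ((Matrix.trace (mpow (Smat W p t) (1/(1+t)))).re) ^ (1+t)

/-!
Write `S = ∑ x, p x • W x ^ (1 + t)`; the objective is linear in the `W x ^ (1 + t)`, so it equals
`Tr[S ρ^{-t}]`. Diagonalising `S = ∑ eᵢ uᵢuᵢ*` and `ρ = ∑ rⱼ vⱼvⱼ*` gives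
`Tr[S ρ^{-t}] = ∑ᵢⱼ eᵢ rⱼ^{-t} |⟨uᵢ, vⱼ⟩|²`, and the overlap matrix `|⟨uᵢ, vⱼ⟩|²` is doubly
stochastic. With `aⱼ = ∑ᵢ eᵢ |⟨uᵢ, vⱼ⟩|²`, concavity of `x ^ (1 / (1 + t))` gives
`∑ eᵢ ^ (1 / (1 + t)) ≤ ∑ aⱼ ^ (1 / (1 + t))`, and Jensen for `x ^ (1 + t)` with weights `rⱼ`
gives `(∑ aⱼ ^ (1 / (1 + t))) ^ (1 + t) ≤ ∑ aⱼ rⱼ^{-t}`. At `ρ = S ^ (1 / (1 + t)) / c` everything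
is a function of `S`, and the value is `c ^ (1 + t)`.
-/

theorem ConcaveOn.sum_le_sum_vecMul {n : Type*} [Fintype n] [DecidableEq n] {f : ℝ → ℝ}
    {s : Set ℝ} (hf : ConcaveOn ℝ s f) {M : Matrix n n ℝ} (hM : M ∈ doublyStochastic ℝ n)
    {e : n → ℝ} (he : ∀ i, e i ∈ s) :
    ∑ i, f (e i) ≤ ∑ j, f ((e ᵥ* M) j) := by
  obtain ⟨hM0, hrow, hcol⟩ := mem_doublyStochastic_iff_sum.mp hM
  calc ∑ i, f (e i) = ∑ j, ∑ i, M i j • f (e i) := by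
        rw [Finset.sum_comm]
        simp only [smul_eq_mul, ← Finset.sum_mul, hrow, one_mul]
    _ ≤ ∑ j, f (∑ i, M i j • e i) := Finset.sum_le_sum fun j _ =>
        hf.le_map_sum (fun i _ => hM0 i j) (hcol j) fun i _ => he i
    _ = ∑ j, f ((e ᵥ* M) j) := by
        simp only [vecMul, dotProduct, smul_eq_mul, mul_comm]

theorem Real.rpow_sum_rpow_one_div_le_sum_mul_rpow_neg {ι : Type*} (s : Finset ι) {t : ℝ}
    (ht : 0 ≤ t) {a r : ι → ℝ} (ha : ∀ i ∈ s, 0 ≤ a i) (hr : ∀ i ∈ s, 0 < r i)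
    (hr1 : ∑ i ∈ s, r i = 1) :
    (∑ i ∈ s, a i ^ (1 / (1 + t))) ^ (1 + t) ≤ ∑ i ∈ s, a i * r i ^ (-t) := by
  have h1t : 1 + t ≠ 0 := by positivity
  have jensen := Real.rpow_arith_mean_le_arith_mean_rpow s r (fun i => a i ^ (1 / (1 + t)) / r i)
    (fun i hi => (hr i hi).le) hr1
    (fun i hi => div_nonneg (Real.rpow_nonneg (ha i hi) _) (hr i hi).le)
    (le_add_of_nonneg_right ht : (1 : ℝ) ≤ 1 + t)
  calc (∑ i ∈ s, a i ^ (1 / (1 + t))) ^ (1 + t)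
      = (∑ i ∈ s, r i * (a i ^ (1 / (1 + t)) / r i)) ^ (1 + t) := by
        congr 1
        exact Finset.sum_congr rfl fun i hi => by field_simp [(hr i hi).ne']
    _ ≤ ∑ i ∈ s, r i * (a i ^ (1 / (1 + t)) / r i) ^ (1 + t) := jensen
    _ = ∑ i ∈ s, a i * r i ^ (-t) := Finset.sum_congr rfl fun i hi => by
        rw [Real.div_rpow (Real.rpow_nonneg (ha i hi) _) (hr i hi).le, ← Real.rpow_mul (ha i hi),
          one_div_mul_cancel h1t, Real.rpow_one, Real.rpow_one_add' (hr i hi).le h1t,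
          Real.rpow_neg (hr i hi).le]
        field_simp [(hr i hi).ne']

namespace Matrix

variable {n : Type*} [Fintype n] [DecidableEq n]

theorem map_normSq_mem_doublyStochastic {U : Matrix n n ℂ} (hU : U ∈ unitaryGroup n ℂ) :
    U.map Complex.normSq ∈ doublyStochastic ℝ n := by
  refine mem_doublyStochastic_iff_sum.mpr ⟨fun i j => Complex.normSq_nonneg _, fun i => ?_,
    fun j => ?_⟩
  · have h := congr_fun₂ (mem_unitaryGroup_iff.mp hU) i i
    simp only [mul_apply, star_apply, one_apply_eq, RCLike.star_def, Complex.mul_conj] at h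
    exact_mod_cast h
  · have h := congr_fun₂ (mem_unitaryGroup_iff'.mp hU) j j
    simp only [mul_apply, star_apply, one_apply_eq, RCLike.star_def,
      ← Complex.normSq_eq_conj_mul_self] at h
    exact_mod_cast h

theorem trace_diagonal_mul_mul_diagonal_mul_star (a b : n → ℝ) (M : Matrix n n ℂ) :
    (diagonal (fun i => (a i : ℂ)) * M * diagonal (fun j => (b j : ℂ)) * star M).trace =
      ((∑ i, ∑ j, a i * b j * Complex.normSq (M i j) : ℝ) : ℂ) := by
  simp only [trace, diag_apply, mul_apply, diagonal_apply, ite_mul, zero_mul, mul_ite, mul_zero,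
    Finset.sum_ite_eq, Finset.sum_ite_eq', Finset.mem_univ, if_true, star_apply, RCLike.star_def]
  push_cast
  refine Finset.sum_congr rfl fun i _ => Finset.sum_congr rfl fun j _ => ?_
  rw [← Complex.mul_conj]
  ring

namespace IsHermitian

variable {A B : Matrix n n ℂ}

/-- `|⟨uᵢ, vⱼ⟩|²` for the eigenvectors `uᵢ` of `A` and `vⱼ` of `B`. -/
noncomputable def eigenvectorOverlap (hA : A.IsHermitian) (hB : B.IsHermitian) : Matrix n n ℝ :=
  (star (hA.eigenvectorUnitary : Matrix n n ℂ) * hB.eigenvectorUnitary).map Complex.normSq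

theorem eigenvectorOverlap_mem_doublyStochastic (hA : A.IsHermitian) (hB : B.IsHermitian) :
    hA.eigenvectorOverlap hB ∈ doublyStochastic ℝ n :=
  map_normSq_mem_doublyStochastic <|
    Submonoid.mul_mem _ (Unitary.star_mem hA.eigenvectorUnitary.2) hB.eigenvectorUnitary.2

theorem trace_cfc (hA : A.IsHermitian) (f : ℝ → ℝ) :
    (cfc f A).trace = ((∑ i, f (hA.eigenvalues i) : ℝ) : ℂ) := by
  rw [hA.cfc_eq, IsHermitian.cfc, Unitary.conjStarAlgAut_apply, trace_mul_cycle,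
    Unitary.star_mul_self_of_mem hA.eigenvectorUnitary.2, one_mul, trace_diagonal]
  push_cast
  rfl

theorem trace_cfc_mul_cfc (hA : A.IsHermitian) (hB : B.IsHermitian) (f g : ℝ → ℝ) :
    (cfc f A * cfc g B).trace = ((∑ i, ∑ j,
      f (hA.eigenvalues i) * g (hB.eigenvalues j) * hA.eigenvectorOverlap hB i j : ℝ) : ℂ) := by
  simp only [eigenvectorOverlap, map_apply]
  rw [← trace_diagonal_mul_mul_diagonal_mul_star, hA.cfc_eq, hB.cfc_eq, IsHermitian.cfc,
    IsHermitian.cfc, Unitary.conjStarAlgAut_apply, Unitary.conjStarAlgAut_apply, star_mul,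
    star_star]
  simp only [Matrix.mul_assoc]
  rw [trace_mul_comm]
  simp only [Matrix.mul_assoc]
  rfl

end IsHermitian

theorem PosSemidef.rpow_re_trace_mpow_le_re_trace_mul_mpow_neg {S ρ : Matrix n n ℂ}
    (hS : S.PosSemidef) (hρ : ρ.PosDef) (hρ1 : ρ.trace = 1) {t : ℝ} (ht : 0 ≤ t) :
    (mpow S (1 / (1 + t))).trace.re ^ (1 + t) ≤ (S * mpow ρ (-t)).trace.re := by
  set e := hS.isHermitian.eigenvalues
  set r := hρ.isHermitian.eigenvalues
  set M := hS.isHermitian.eigenvectorOverlap hρ.isHermitian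
  have he : ∀ i, 0 ≤ e i := hS.eigenvalues_nonneg
  have hr1 : ∑ j, r j = 1 := by
    rw [← Complex.ofReal_eq_one, Complex.ofReal_sum, ← hρ1,
      hρ.isHermitian.trace_eq_sum_eigenvalues]
    rfl
  have heM : ∀ j, 0 ≤ (e ᵥ* M) j := fun j => Finset.sum_nonneg fun i _ =>
    mul_nonneg (he i) (Complex.normSq_nonneg _)
  have hα : 1 / (1 + t) ≤ 1 := div_le_one_of_le₀ (by linarith) (by positivity)
  conv_rhs => rw [← cfc_id' ℝ S hS.isHermitian.isSelfAdjoint]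
  rw [mpow, mpow, hS.isHermitian.trace_cfc, hS.isHermitian.trace_cfc_mul_cfc hρ.isHermitian,
    Complex.ofReal_re, Complex.ofReal_re]
  calc (∑ i, e i ^ (1 / (1 + t))) ^ (1 + t)
      ≤ (∑ j, (e ᵥ* M) j ^ (1 / (1 + t))) ^ (1 + t) :=
        Real.rpow_le_rpow (Finset.sum_nonneg fun i _ => Real.rpow_nonneg (he i) _)
          ((Real.concaveOn_rpow (by positivity) hα).sum_le_sum_vecMul
            (hS.isHermitian.eigenvectorOverlap_mem_doublyStochastic hρ.isHermitian) he)
          (by positivity)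
    _ ≤ ∑ j, (e ᵥ* M) j * r j ^ (-t) :=
        Real.rpow_sum_rpow_one_div_le_sum_mul_rpow_neg _ ht (fun j _ => heM j)
          (fun j _ => hρ.eigenvalues_pos j) hr1
    _ = ∑ i, ∑ j, e i * r j ^ (-t) * M i j := by
        simp only [vecMul, dotProduct, Finset.sum_mul]
        rw [Finset.sum_comm]
        exact Finset.sum_congr rfl fun i _ => Finset.sum_congr rfl fun j _ => by ring

theorem PosDef.re_trace_mul_mpow_neg_normalized {S : Matrix n n ℂ} (hS : S.PosDef) {t : ℝ}
    (ht : 1 + t ≠ 0) :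
    (S * mpow ((((mpow S (1 / (1 + t))).trace.re⁻¹ : ℝ) : ℂ) • mpow S (1 / (1 + t))) (-t)
      ).trace.re = (mpow S (1 / (1 + t))).trace.re ^ (1 + t) := by
  have hSa : IsSelfAdjoint S := hS.isHermitian.isSelfAdjoint
  have hfin : (spectrum ℝ S).Finite := finite_real_spectrum
  set e := hS.isHermitian.eigenvalues
  set c := ∑ i, e i ^ (1 / (1 + t))
  have hc : (mpow S (1 / (1 + t))).trace.re = c := by
    rw [mpow, hS.isHermitian.trace_cfc, Complex.ofReal_re]
  have hc0 : 0 ≤ c := Finset.sum_nonneg fun i _ => Real.rpow_nonneg (hS.eigenvalues_pos i).le _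
  have hprod : S * mpow (((c⁻¹ : ℝ) : ℂ) • mpow S (1 / (1 + t))) (-t) =
      cfc (fun x => x * (c⁻¹ * x ^ (1 / (1 + t))) ^ (-t)) S := by
    rw [mpow, mpow, Complex.coe_smul, ← cfc_const_mul c⁻¹ _ S (hfin.continuousOn _),
      ← cfc_comp (fun x : ℝ => x ^ (-t)) _ S hSa ((hfin.image _).continuousOn _)
        (hfin.continuousOn _), cfc_mul _ _ S (hfin.continuousOn _) (hfin.continuousOn _),
      cfc_id' ℝ S hSa]
    rfl
  have hterm (i) : e i * (c⁻¹ * e i ^ (1 / (1 + t))) ^ (-t) = c ^ t * e i ^ (1 / (1 + t)) := by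
    have he := hS.eigenvalues_pos i
    have hexp : 1 + 1 / (1 + t) * -t = 1 / (1 + t) := by
      field_simp
      ring
    rw [Real.mul_rpow (inv_nonneg.mpr hc0) (Real.rpow_nonneg he.le _), Real.inv_rpow hc0,
      ← Real.rpow_neg hc0, neg_neg, ← Real.rpow_mul he.le, mul_left_comm,
      ← Real.rpow_one_add' he.le (by rw [hexp]; exact one_div_ne_zero ht), hexp]
  rw [hc, hprod, hS.isHermitian.trace_cfc, Complex.ofReal_re,
    Finset.sum_congr rfl fun i _ => hterm i, ← Finset.mul_sum, Real.rpow_one_add' hc0 ht, mul_comm]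

end Matrix

theorem re_trace_Smat_mul {X : Type*} [Fintype X] {d : ℕ} (W : X → Matrix (Fin d) (Fin d) ℂ)
    (p : X → ℝ) (t : ℝ) (B : Matrix (Fin d) (Fin d) ℂ) :
    (Smat W p t * B).trace.re = ∑ x, p x * (mpow (W x) (1 + t) * B).trace.re := by
  simp only [Smat, Finset.sum_mul, smul_mul_assoc, trace_sum, trace_smul, Complex.re_sum,
    smul_eq_mul, Complex.re_ofReal_mul]

theorem min_trace_power_general {X : Type*} [Fintype X] {d : ℕ}
    (W : X → Matrix (Fin d) (Fin d) ℂ) (p : X → ℝ) (t : ℝ) (ht : 0 ≤ t)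
    (hS : (Smat W p t).PosDef) :
    (∀ ρ : Matrix (Fin d) (Fin d) ℂ, ρ.PosDef → Matrix.trace ρ = 1 →
        targetVal W p t ≤ ∑ x, p x * (Matrix.trace (mpow (W x) (1+t) * mpow ρ (-t))).re) ∧
    (∑ x, p x * (Matrix.trace (mpow (W x) (1+t) * mpow
        (((((Matrix.trace (mpow (Smat W p t) (1/(1+t)))).re)⁻¹ : ℝ) : ℂ) •
          mpow (Smat W p t) (1/(1+t))) (-t))).re
      = targetVal W p t) := by
  simp only [← re_trace_Smat_mul, targetVal]
  exact ⟨fun ρ hρ hρ1 => hS.posSemidef.rpow_re_trace_mpow_le_re_trace_mul_mpow_neg hρ hρ1 ht,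
    hS.re_trace_mul_mpow_neg_normalized (by positivity)⟩

/-- The minimum over density matrices ρ of `∑_x p(x) Tr[W_x^{1+t} ρ^{-t}]` equals
`(Tr[(∑_x p(x) W_x^{1+t})^{1/(1+t)}])^{1+t}`, attained at
`ρ = (∑_x p(x)W_x^{1+t})^{1/(1+t)} / Tr[(∑_x p(x)W_x^{1+t})^{1/(1+t)}]`. -/
theorem min_trace_power {X : Type*} [Fintype X] {d : ℕ}
    (W : X → Matrix (Fin d) (Fin d) ℂ) (p : X → ℝ) (t : ℝ) (ht : 0 ≤ t)
    (hW : ∀ x, (W x).PosSemidef) (hWtr : ∀ x, Matrix.trace (W x) = 1)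
    (hp : ∀ x, 0 ≤ p x) (hp1 : ∑ x, p x = 1)
    (hS : (Smat W p t).PosDef) :
    (∀ ρ : Matrix (Fin d) (Fin d) ℂ, ρ.PosDef → Matrix.trace ρ = 1 →
        targetVal W p t ≤ ∑ x, p x * (Matrix.trace (mpow (W x) (1+t) * mpow ρ (-t))).re) ∧
    (∑ x, p x * (Matrix.trace (mpow (W x) (1+t) * mpow
        (((((Matrix.trace (mpow (Smat W p t) (1/(1+t)))).re)⁻¹ : ℝ) : ℂ) •
          mpow (Smat W p t) (1/(1+t))) (-t))).re
      = targetVal W p t) :=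
  min_trace_power_general W p t ht hS
end

section
/- Define ψ(t|W,p) = log ∑_x p(x) Tr[W_x^{1+t} W_p^{-t}] with W_p = ∑_x p(x)W_x, and φ(s|W,p) = log Tr[(∑_x p(x) W_x^{1/(1-s)})^{1-s}]. Then for all t ≥ 0, ψ(t|W,p) ≥ (1+t)·φ(t/(1+t)|W,p). -/
open Matrix
open scoped ComplexOrder Kronecker

/-!
Put `A = ∑ₓ p(x) W_x^{1+t}` and `σ = W_p`. The left side is `log Tr[A σ^{-t}]` and the right side
is `(1+t) log Tr[A^{1/(1+t)}]`, so this is the choice `ρ = σ` in the minimisation over states `ρ`.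
In eigenbases `(uᵢ)` of `A` and `(vⱼ)` of `σ`, with eigenvalues `aᵢ` and `sⱼ`,
`Tr[A σ^{-t}] = ∑ᵢⱼ cᵢⱼ aᵢ sⱼ^{-t}` where `cᵢⱼ = |⟨uᵢ, vⱼ⟩|²` is doubly stochastic. Since `Tr σ = 1`,
the weights `cᵢⱼ sⱼ` form a probability distribution, and Jensen's inequality for `x ↦ x^{1+t}`
at the points `aᵢ^{1/(1+t)} / sⱼ` gives `(∑ᵢ aᵢ^{1/(1+t)})^{1+t} ≤ ∑ᵢⱼ cᵢⱼ aᵢ sⱼ^{-t}`.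
-/

lemma sum_rpow_inv_rpow_le_sum_mul_rpow {ι : Type*} [Fintype ι] [DecidableEq ι]
    {a s : ι → ℝ} {c : Matrix ι ι ℝ} (ha : ∀ i, 0 ≤ a i) (hs : ∀ j, 0 < s j)
    (hc : c ∈ doublyStochastic ℝ ι) (hs1 : ∑ j, s j = 1) {p : ℝ} (hp : 1 ≤ p) :
    (∑ i, a i ^ p⁻¹) ^ p ≤ ∑ i, ∑ j, c i j * a i * s j ^ (1 - p) := by
  have hw : ∑ ij : ι × ι, c ij.1 ij.2 * s ij.2 = 1 := by
    rw [Fintype.sum_prod_type, Finset.sum_comm, ← hs1]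
    exact Finset.sum_congr rfl fun j _ => by
      simp only [← Finset.sum_mul, sum_col_of_mem_doublyStochastic hc, one_mul]
  have jensen := Real.rpow_arith_mean_le_arith_mean_rpow Finset.univ
    (fun ij : ι × ι => c ij.1 ij.2 * s ij.2) (fun ij => a ij.1 ^ p⁻¹ / s ij.2)
    (fun ij _ => mul_nonneg (nonneg_of_mem_doublyStochastic hc) (hs _).le) hw
    (fun ij _ => div_nonneg (Real.rpow_nonneg (ha _) _) (hs _).le) hp
  simp only [Fintype.sum_prod_type] at jensen
  have hlhs (i j : ι) : c i j * s j * (a i ^ p⁻¹ / s j) = c i j * a i ^ p⁻¹ := by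
    field_simp [(hs j).ne']
  have hrhs (i j : ι) :
      c i j * s j * (a i ^ p⁻¹ / s j) ^ p = c i j * a i * s j ^ (1 - p) := by
    rw [Real.div_rpow (Real.rpow_nonneg (ha i) _) (hs j).le, ← Real.rpow_mul (ha i),
      inv_mul_cancel₀ (by linarith), Real.rpow_one, Real.rpow_sub (hs j), Real.rpow_one]
    field_simp
  simpa only [hlhs, hrhs, ← Finset.sum_mul, sum_row_of_mem_doublyStochastic hc, one_mul]
    using jensen

section

variable {n : Type*} [Fintype n]

lemma re_trace_sum_smul {X : Type*} [Fintype X] (p : X → ℝ) (B : X → Matrix n n ℂ) :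
    (trace (∑ x, (p x : ℂ) • B x)).re = ∑ x, p x * (trace (B x)).re := by
  simp only [trace_sum, trace_smul, smul_eq_mul, Complex.re_sum, Complex.re_ofReal_mul]

variable [DecidableEq n]

lemma sum_norm_sq_unitary_row_eq_one (U : unitaryGroup n ℂ) (i : n) :
    ∑ j, ‖(U : Matrix n n ℂ) i j‖ ^ 2 = 1 := by
  have h : ((U : Matrix n n ℂ) * star (U : Matrix n n ℂ)) i i = 1 := by
    rw [mem_unitaryGroup_iff.mp U.2, one_apply_eq]
  rw [mul_apply] at h
  simp only [star_apply, RCLike.star_def, Complex.mul_conj, Complex.normSq_eq_norm_sq] at h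
  exact_mod_cast h

lemma norm_sq_unitary_mem_doublyStochastic (U : unitaryGroup n ℂ) :
    of (fun i j => ‖(U : Matrix n n ℂ) i j‖ ^ 2) ∈ doublyStochastic ℝ n := by
  refine mem_doublyStochastic_iff_sum.mpr ⟨fun i j => sq_nonneg _,
    sum_norm_sq_unitary_row_eq_one U, fun j => ?_⟩
  simpa [star_apply] using sum_norm_sq_unitary_row_eq_one (star U) j

lemma Matrix.IsHermitian.trace_cfc_s11 {A : Matrix n n ℂ} (hA : A.IsHermitian) (f : ℝ → ℝ) :
    trace (cfc f A) = ∑ i, (f (hA.eigenvalues i) : ℂ) := by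
  rw [hA.cfc_eq, IsHermitian.cfc, Unitary.conjStarAlgAut_apply, trace_mul_cycle,
    Unitary.coe_star_mul_self, one_mul, trace_diagonal]
  rfl

lemma Matrix.IsHermitian.trace_cfc_mul_cfc_s11 {A B : Matrix n n ℂ} (hA : A.IsHermitian)
    (hB : B.IsHermitian) (f g : ℝ → ℝ) :
    trace (cfc f A * cfc g B) = ∑ i, ∑ j,
      ((‖(star (hA.eigenvectorUnitary : Matrix n n ℂ) * hB.eigenvectorUnitary) i j‖ ^ 2 *
        f (hA.eigenvalues i) * g (hB.eigenvalues j) : ℝ) : ℂ) := by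
  set U : Matrix n n ℂ := (hA.eigenvectorUnitary : Matrix n n ℂ)
  set V : Matrix n n ℂ := (hB.eigenvectorUnitary : Matrix n n ℂ)
  set Df : Matrix n n ℂ := diagonal (RCLike.ofReal ∘ f ∘ hA.eigenvalues)
  set Dg : Matrix n n ℂ := diagonal (RCLike.ofReal ∘ g ∘ hB.eigenvalues)
  have hcycle :
      trace (cfc f A * cfc g B) = trace (Df * (star U * V) * Dg * star (star U * V)) := by
    rw [hA.cfc_eq, hB.cfc_eq, IsHermitian.cfc, IsHermitian.cfc, Unitary.conjStarAlgAut_apply,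
      Unitary.conjStarAlgAut_apply, star_mul, star_star,
      show U * Df * star U * (V * Dg * star V) = U * (Df * (star U * (V * (Dg * star V)))) by
        simp only [mul_assoc], trace_mul_comm]
    simp only [mul_assoc]
  rw [hcycle, trace]
  refine Finset.sum_congr rfl fun i _ => ?_
  rw [diag_apply, mul_apply]
  refine Finset.sum_congr rfl fun j _ => ?_
  simp only [Df, Dg, mul_diagonal, diagonal_mul, star_apply, Function.comp_apply, RCLike.star_def,
    RCLike.ofReal_eq_complex_ofReal]
  push_cast
  rw [← Complex.ofReal_pow, ← Complex.normSq_eq_norm_sq, Complex.normSq_eq_conj_mul_self]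
  ring

lemma posSemidef_mpow {A : Matrix n n ℂ} (hA : A.PosSemidef) (r : ℝ) :
    (mpow A r).PosSemidef := by
  open scoped MatrixOrder in
  rw [← nonneg_iff_posSemidef] at hA ⊢
  exact cfc_nonneg fun x hx => Real.rpow_nonneg (spectrum_nonneg_of_nonneg hA hx) r

lemma Matrix.PosSemidef.re_trace_mpow_pos {A : Matrix n n ℂ} (hA : A.PosSemidef) (hA0 : A ≠ 0)
    (r : ℝ) : 0 < (trace (mpow A r)).re := by
  rw [mpow, hA.1.trace_cfc_s11, Complex.re_sum]
  obtain ⟨i, hi⟩ : ∃ i, hA.1.eigenvalues i ≠ 0 := by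
    by_contra! h
    exact hA0 (hA.1.eigenvalues_eq_zero_iff.mp (funext h))
  refine Finset.sum_pos' (fun j _ => ?_) ⟨i, Finset.mem_univ _, ?_⟩
  · simpa using Real.rpow_nonneg (hA.eigenvalues_nonneg j) r
  · simpa using Real.rpow_pos_of_pos ((hA.eigenvalues_nonneg i).lt_of_ne' hi) r

lemma Matrix.PosSemidef.re_trace_mpow_inv_rpow_le {A σ : Matrix n n ℂ} (hA : A.PosSemidef)
    (hσ : σ.PosDef) (hσtr : σ.trace = 1) {p : ℝ} (hp : 1 ≤ p) :
    (trace (mpow A p⁻¹)).re ^ p ≤ (trace (A * mpow σ (1 - p))).re := by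
  have hs1 : ∑ j, hσ.1.eigenvalues j = 1 := by
    have h := hσ.1.trace_eq_sum_eigenvalues
    rw [hσtr, RCLike.ofReal_eq_complex_ofReal] at h
    exact_mod_cast h.symm
  rw [mpow, mpow, hA.1.trace_cfc_s11]
  conv_rhs => rw [← cfc_id' ℝ A hA.1.isSelfAdjoint]
  rw [hA.1.trace_cfc_mul_cfc_s11 hσ.1]
  simp only [Complex.re_sum, Complex.ofReal_re]
  exact sum_rpow_inv_rpow_le_sum_mul_rpow hA.eigenvalues_nonneg hσ.eigenvalues_pos
    (norm_sq_unitary_mem_doublyStochastic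
      (star hA.1.eigenvectorUnitary * hσ.1.eigenvectorUnitary)) hs1 hp

lemma sum_smul_mpow_ne_zero {X : Type*} [Fintype X] {W : X → Matrix n n ℂ} {p : X → ℝ}
    (hW : ∀ x, (W x).PosSemidef) (hW0 : ∀ x, W x ≠ 0) (hp : ∀ x, 0 ≤ p x) (hp0 : p ≠ 0)
    (r : ℝ) : ∑ x, (p x : ℂ) • mpow (W x) r ≠ 0 := by
  obtain ⟨x₀, hx₀⟩ := Function.ne_iff.mp hp0
  have hpos : 0 < ∑ x, p x * (trace (mpow (W x) r)).re :=
    Finset.sum_pos' (fun x _ => mul_nonneg (hp x)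
        (Complex.nonneg_iff.mp (posSemidef_mpow (hW x) r).trace_nonneg).1)
      ⟨x₀, Finset.mem_univ _,
        mul_pos ((hp x₀).lt_of_ne' hx₀) ((hW x₀).re_trace_mpow_pos (hW0 x₀) r)⟩
  rw [← re_trace_sum_smul] at hpos
  intro h
  rw [h, trace_zero, Complex.zero_re] at hpos
  exact hpos.false

end

/-- `ψ(t|W,p) ≥ (1+t) φ(t/(1+t)|W,p)` for `t ≥ 0`, where
`ψ(t|W,p) = log ∑_x p(x) Tr[W_x^{1+t} W_p^{-t}]` and
`φ(s|W,p) = log Tr[(∑_x p(x) W_x^{1/(1-s)})^{1-s}]`. -/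
theorem psi_ge_phi {X : Type*} [Fintype X] {d : ℕ}
    (W : X → Matrix (Fin d) (Fin d) ℂ) (p : X → ℝ) (t : ℝ) (ht : 0 ≤ t)
    (hW : ∀ x, (W x).PosSemidef) (hWtr : ∀ x, Matrix.trace (W x) = 1)
    (hp : ∀ x, 0 ≤ p x) (hp1 : ∑ x, p x = 1)
    (hWp : (∑ x, (p x : ℂ) • W x).PosDef) :
    Real.log (∑ x, p x *
        (Matrix.trace (mpow (W x) (1+t) * mpow (∑ x, (p x : ℂ) • W x) (-t))).re)
      ≥ (1+t) * Real.log ((Matrix.trace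
          (mpow (∑ x, (p x : ℂ) • mpow (W x) (1/(1 - t/(1+t)))) (1 - t/(1+t)))).re) := by
  rw [show 1 - t / (1 + t) = (1 + t)⁻¹ by field_simp; ring, one_div, inv_inv,
    show -t = 1 - (1 + t) by ring]
  set σ := ∑ x, (p x : ℂ) • W x
  set A := ∑ x, (p x : ℂ) • mpow (W x) (1 + t)
  have hσtr : σ.trace = 1 := by
    simp only [σ, trace_sum, trace_smul, hWtr, smul_eq_mul, mul_one]
    exact_mod_cast hp1
  have hA : A.PosSemidef := posSemidef_sum _ fun x _ =>
    (posSemidef_mpow (hW x) _).smul (Complex.zero_le_real.mpr (hp x))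
  have hA0 : A ≠ 0 := sum_smul_mpow_ne_zero hW (fun x h => by simpa [h] using hWtr x) hp
    (by rintro rfl; simp at hp1) _
  have hT := hA.re_trace_mpow_pos hA0 (1 + t)⁻¹
  have key := hA.re_trace_mpow_inv_rpow_le hWp hσtr (by linarith : 1 ≤ 1 + t)
  have hLHS : ∑ x, p x * (trace (mpow (W x) (1 + t) * mpow σ (1 - (1 + t)))).re =
      (trace (A * mpow σ (1 - (1 + t)))).re := by
    simp only [A, Finset.sum_mul, smul_mul_assoc, re_trace_sum_smul]
  rw [hLHS, ge_iff_le, ← Real.log_rpow hT]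
  exact Real.log_le_log (Real.rpow_pos_of_pos hT _) key
end

section
/- The function p ↦ exp(φ(s|W,p)) = Tr[(∑_x p(x) W_x^{1/(1-s)})^{1-s}] is concave in the probability distribution p for s ∈ [0,1], and convex for s ∈ [-1,0]. -/
open Matrix
open scoped ComplexOrder Kronecker

/-!
The map `p ↦ ∑ₓ p(x) Wₓ^{1/(1-s)}` is linear and sends the simplex into the positive semidefinite
cone, and `t ↦ t ^ (1 - s)` is concave on `[0, ∞)` for `s ∈ [0, 1]` and convex for `s ∈ [-1, 0]`.
So it suffices that `A ↦ Tr f(A)` is concave on that cone whenever `f` is concave on `[0, ∞)`.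
Let a unitary `U` diagonalize `C = a A + b B`. Peierls' inequality `Tr f(M) ≤ ∑ᵢ f((U⋆ M U)ᵢᵢ)` is
Jensen's inequality for the doubly stochastic matrix `|(V⋆ U)ⱼᵢ|²`, where `V` diagonalizes `M`.
Apply it to `A` and `B`, then use concavity of `f` at the diagonal entries: these are affine in
`M`, and for `M = C` they are the eigenvalues of `C`.
-/

namespace Matrix
variable {n 𝕜 : Type*} [Fintype n] [DecidableEq n] [RCLike 𝕜]

lemma sum_norm_sq_row_eq_one_of_mul_star_eq_one {V : Matrix n n 𝕜} (hV : V * star V = 1)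
    (i : n) : ∑ j, ‖V i j‖ ^ 2 = 1 := by
  have := congrArg (fun M : Matrix n n 𝕜 => RCLike.re (M i i)) hV
  simp only [mul_apply, star_apply, one_apply_eq, RCLike.one_re, map_sum] at this
  rw [← this]
  congr 1; ext j
  rw [RCLike.star_def, RCLike.mul_conj]
  norm_cast

lemma of_norm_sq_mem_doublyStochastic_of_mem_unitary {U : Matrix n n 𝕜}
    (hU : U ∈ unitary (Matrix n n 𝕜)) : of (fun i j => ‖U i j‖ ^ 2) ∈ doublyStochastic ℝ n := by
  refine mem_doublyStochastic_iff_sum.mpr ⟨fun i j => by simp only [of_apply]; positivity,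
    sum_norm_sq_row_eq_one_of_mul_star_eq_one hU.2, fun j => ?_⟩
  simpa [star_apply] using
    sum_norm_sq_row_eq_one_of_mul_star_eq_one (V := star U) (by simpa using hU.1) j

lemma IsHermitian.re_trace_cfc_s12 {A : Matrix n n 𝕜} (hA : A.IsHermitian) (f : ℝ → ℝ) :
    RCLike.re (cfc f A).trace = ∑ i, f (hA.eigenvalues i) := by
  rw [hA.cfc_eq, IsHermitian.cfc, Unitary.conjStarAlgAut_apply, trace_mul_cycle,
    Unitary.coe_star_mul_self, one_mul, trace_diagonal]
  simp

lemma re_diag_star_mul_diagonal_mul (S : Matrix n n 𝕜) (v : n → ℝ) (i : n) :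
    RCLike.re ((star S * diagonal (RCLike.ofReal ∘ v : n → 𝕜) * S) i i)
      = ∑ j, ‖S j i‖ ^ 2 * v j := by
  rw [mul_apply, map_sum]
  simp only [mul_diagonal, star_apply, Function.comp_apply]
  congr 1; ext j
  rw [mul_right_comm, RCLike.star_def, mul_comm (starRingEnd 𝕜 _), RCLike.mul_conj]
  norm_cast

lemma IsHermitian.re_diag_star_mul_mul {M : Matrix n n 𝕜} (hM : M.IsHermitian)
    (U : Matrix n n 𝕜) (i : n) :
    RCLike.re ((star U * M * U) i i)
      = ∑ j, ‖(star (hM.eigenvectorUnitary : Matrix n n 𝕜) * U) j i‖ ^ 2 * hM.eigenvalues j := by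
  rw [← re_diag_star_mul_diagonal_mul]
  conv_lhs => rw [hM.spectral_theorem, Unitary.conjStarAlgAut_apply]
  simp only [star_mul, star_star, mul_assoc]

section Peierls

variable {M U : Matrix n n 𝕜} (hM : M.IsHermitian) (hU : U ∈ unitary (Matrix n n 𝕜))
  {I : Set ℝ} (hI : ∀ j, hM.eigenvalues j ∈ I)
include hM hU hI

lemma IsHermitian.re_diag_star_mul_mul_mem (hIc : Convex ℝ I) (i : n) :
    RCLike.re ((star U * M * U) i i) ∈ I := by
  have hw := of_norm_sq_mem_doublyStochastic_of_mem_unitary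
    (mul_mem (Unitary.star_mem hM.eigenvectorUnitary.2) hU)
  rw [hM.re_diag_star_mul_mul]
  exact hIc.sum_mem (fun j _ => nonneg_of_mem_doublyStochastic hw)
    (sum_col_of_mem_doublyStochastic hw i) (fun j _ => hI j)

theorem IsHermitian.re_trace_cfc_le_sum_diag {f : ℝ → ℝ} (hf : ConcaveOn ℝ I f) :
    RCLike.re (cfc f M).trace ≤ ∑ i, f (RCLike.re ((star U * M * U) i i)) := by
  set w := of fun j i => ‖(star (hM.eigenvectorUnitary : Matrix n n 𝕜) * U) j i‖ ^ 2
  have hw : w ∈ doublyStochastic ℝ n := of_norm_sq_mem_doublyStochastic_of_mem_unitary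
    (mul_mem (Unitary.star_mem hM.eigenvectorUnitary.2) hU)
  calc RCLike.re (cfc f M).trace
      = ∑ j, (∑ i, w j i) * f (hM.eigenvalues j) := by
        simp [hM.re_trace_cfc_s12, sum_row_of_mem_doublyStochastic hw]
    _ = ∑ i, ∑ j, w j i • f (hM.eigenvalues j) := by
        simp only [Finset.sum_mul, smul_eq_mul]
        exact Finset.sum_comm
    _ ≤ ∑ i, f (∑ j, w j i • hM.eigenvalues j) := Finset.sum_le_sum fun i _ =>
        hf.le_map_sum (fun j _ => nonneg_of_mem_doublyStochastic hw)
          (sum_col_of_mem_doublyStochastic hw i) (fun j _ => hI j)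
    _ = ∑ i, f (RCLike.re ((star U * M * U) i i)) := by
        simp [w, hM.re_diag_star_mul_mul]

end Peierls

omit [Fintype n] [DecidableEq n] in
lemma convex_setOf_posSemidef : Convex ℝ {A : Matrix n n 𝕜 | A.PosSemidef} :=
  fun _ hA _ hB _ _ ha hb _ => (hA.smul ha).add (hB.smul hb)

theorem concaveOn_re_trace_cfc {f : ℝ → ℝ} (hf : ConcaveOn ℝ (Set.Ici 0) f) :
    ConcaveOn ℝ {A : Matrix n n 𝕜 | A.PosSemidef} (fun A => RCLike.re (cfc f A).trace) := by
  refine ⟨convex_setOf_posSemidef, fun A hA B hB a b ha hb hab => ?_⟩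
  have hC : (a • A + b • B).PosSemidef := convex_setOf_posSemidef hA hB ha hb hab
  set U := hC.1.eigenvectorUnitary
  let q (M : Matrix n n 𝕜) (i : n) : ℝ := RCLike.re ((star (U : Matrix n n 𝕜) * M * U) i i)
  have hqC (i : n) : q (a • A + b • B) i = hC.1.eigenvalues i := by
    have := congrFun₂ hC.1.conjStarAlgAut_star_eigenvectorUnitary i i
    rw [Unitary.conjStarAlgAut_star_apply, diagonal_apply_eq] at this
    exact (congrArg RCLike.re this).trans (RCLike.ofReal_re _)
  have hq_add (i : n) : q (a • A + b • B) i = a * q A i + b * q B i := by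
    simp [q, Matrix.mul_add, Matrix.add_mul, RCLike.smul_re]
  have hq_mem {M : Matrix n n 𝕜} (hM : M.PosSemidef) (i : n) : q M i ∈ Set.Ici 0 :=
    hM.1.re_diag_star_mul_mul_mem U.2 hM.eigenvalues_nonneg (convex_Ici 0) i
  calc a • RCLike.re (cfc f A).trace + b • RCLike.re (cfc f B).trace
      ≤ a • ∑ i, f (q A i) + b • ∑ i, f (q B i) := by
        gcongr
        · exact hA.1.re_trace_cfc_le_sum_diag U.2 hA.eigenvalues_nonneg hf
        · exact hB.1.re_trace_cfc_le_sum_diag U.2 hB.eigenvalues_nonneg hf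
    _ ≤ ∑ i, f (q (a • A + b • B) i) := by
        simp only [Finset.smul_sum, ← Finset.sum_add_distrib, hq_add]
        exact Finset.sum_le_sum fun i _ => hf.2 (hq_mem hA i) (hq_mem hB i) ha hb hab
    _ = RCLike.re (cfc f (a • A + b • B)).trace := by
        simp only [hqC, hC.1.re_trace_cfc_s12]

theorem convexOn_re_trace_cfc {f : ℝ → ℝ} (hf : ConvexOn ℝ (Set.Ici 0) f) :
    ConvexOn ℝ {A : Matrix n n 𝕜 | A.PosSemidef} (fun A => RCLike.re (cfc f A).trace) := by
  have := concaveOn_re_trace_cfc (𝕜 := 𝕜) (n := n) hf.neg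
  simp only [cfc_neg', Pi.neg_apply, trace_neg, map_neg] at this
  exact neg_concaveOn_iff.mp this

end Matrix

open scoped MatrixOrder in
lemma mpow_posSemidef {n : Type*} [Fintype n] [DecidableEq n] {A : Matrix n n ℂ}
    (hA : A.PosSemidef) (r : ℝ) : (mpow A r).PosSemidef :=
  nonneg_iff_posSemidef.mp <| cfc_nonneg fun _ hx =>
    Real.rpow_nonneg (spectrum_nonneg_of_nonneg (nonneg_iff_posSemidef.mpr hA) hx) r

theorem exp_phi_concave_convex_general {X : Type*} [Fintype X] {d : ℕ}
    (W : X → Matrix (Fin d) (Fin d) ℂ)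
    (hW : ∀ x, (W x).PosSemidef) (s : ℝ) :
    (s ∈ Set.Icc (0:ℝ) 1 →
      ConcaveOn ℝ (stdSimplex ℝ X) (fun p : X → ℝ =>
        (Matrix.trace (mpow (∑ x, (p x : ℂ) • mpow (W x) (1/(1-s))) (1-s))).re)) ∧
    (s ∈ Set.Icc (-1:ℝ) 0 →
      ConvexOn ℝ (stdSimplex ℝ X) (fun p : X → ℝ =>
        (Matrix.trace (mpow (∑ x, (p x : ℂ) • mpow (W x) (1/(1-s))) (1-s))).re)) := by
  set L := Fintype.linearCombination ℝ fun x => mpow (W x) (1/(1-s))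
  have hL : stdSimplex ℝ X ⊆ L ⁻¹' {A | A.PosSemidef} := fun p hp =>
    posSemidef_sum _ fun x _ => (mpow_posSemidef (hW x) _).smul (hp.1 x)
  have hφ : (fun p : X → ℝ =>
      (Matrix.trace (mpow (∑ x, (p x : ℂ) • mpow (W x) (1/(1-s))) (1-s))).re)
      = (fun A => RCLike.re (cfc (fun t : ℝ => t ^ (1-s)) A).trace) ∘ L := by
    funext p
    simp only [Function.comp_apply, L, Fintype.linearCombination_apply,
      RCLike.real_smul_eq_coe_smul (K := ℂ)]
    rfl
  rw [hφ]
  refine ⟨fun hs => ?_, fun hs => ?_⟩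
  · have hf := Real.concaveOn_rpow (p := 1 - s) (by linarith [hs.2]) (by linarith [hs.1])
    exact ((concaveOn_re_trace_cfc hf).comp_linearMap L).subset hL (convex_stdSimplex ℝ X)
  · have hf := convexOn_rpow (p := 1 - s) (by linarith [hs.2])
    exact ((convexOn_re_trace_cfc hf).comp_linearMap L).subset hL (convex_stdSimplex ℝ X)

/-- `p ↦ exp(φ(s|W,p)) = Tr[(∑_x p(x) W_x^{1/(1-s)})^{1-s}]` is concave on the probability
simplex for `s ∈ [0,1]` and convex for `s ∈ [-1,0]`. -/
theorem exp_phi_concave_convex {X : Type*} [Fintype X] {d : ℕ}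
    (W : X → Matrix (Fin d) (Fin d) ℂ)
    (hW : ∀ x, (W x).PosSemidef) (hWtr : ∀ x, Matrix.trace (W x) = 1) (s : ℝ) :
    (s ∈ Set.Icc (0:ℝ) 1 →
      ConcaveOn ℝ (stdSimplex ℝ X) (fun p : X → ℝ =>
        (Matrix.trace (mpow (∑ x, (p x : ℂ) • mpow (W x) (1/(1-s))) (1-s))).re)) ∧
    (s ∈ Set.Icc (-1:ℝ) 0 →
      ConvexOn ℝ (stdSimplex ℝ X) (fun p : X → ℝ =>
        (Matrix.trace (mpow (∑ x, (p x : ℂ) • mpow (W x) (1/(1-s))) (1-s))).re)) :=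
  exp_phi_concave_convex_general W hW s
end
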